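/- arXiv:2411.15487 — 8 statements merged into one kernel-verified Lean document; each statement's English description precedes it below -/
import Mathlib

section
/- Assume condition (C). Then the function φ_{ω,c} is smooth, bounded, and strictly positive on ℝ, and it satisfies equation (E) at every point ξ ∈ ℝ. -/
open MeasureTheory Filter

/-- The explicit soliton profile `φ_{ω,c}`. -/
noncomputable def solitonProfile (α β ω c : ℝ) (ξ : ℝ) : ℝ :=
  Real.sqrt (2 * (1 - c^2 - ω^2) / (α - β * (1 - c^2))) *
    (1 / Real.cosh (Real.sqrt (1 - c^2 - ω^2) * ξ / (1 - c^2)))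

theorem stmt0 (α β ω c : ℝ) (hβ : β ≠ 0) (hc : |c| < 1)
    (hC1 : 1 - c^2 - ω^2 > 0) (hC2 : α - β * (1 - c^2) > 0) :
    ContDiff ℝ (⊤ : ℕ∞) (solitonProfile α β ω c) ∧
    (∃ M : ℝ, ∀ ξ : ℝ, |solitonProfile α β ω c ξ| ≤ M) ∧
    (∀ ξ : ℝ, 0 < solitonProfile α β ω c ξ) ∧
    (∀ ξ : ℝ,
      deriv (deriv (solitonProfile α β ω c)) ξ
        - ((1 - c^2 - ω^2) / (1 - c^2)^2) * solitonProfile α β ω c ξ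
        + ((α - β * (1 - c^2)) / (1 - c^2)^2) * (solitonProfile α β ω c ξ)^3 = 0) := by
  have hd : (0:ℝ) < 1 - c^2 := by
    have : c^2 < 1 := by
      have := abs_lt.mp hc
      nlinarith [this.1, this.2]
    linarith
  set s : ℝ := 1 - c^2 - ω^2 with hs
  set d : ℝ := 1 - c^2 with hdd
  set k : ℝ := Real.sqrt s / d with hk
  set A : ℝ := Real.sqrt (2 * s / (α - β * d)) with hA
  have hApos : 0 < A := Real.sqrt_pos.mpr (by positivity)
  have hksq : k^2 = s / d^2 := by
    rw [hk, div_pow, Real.sq_sqrt hC1.le]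
  have hAsq : A^2 = 2 * s / (α - β * d) := Real.sq_sqrt (by positivity)
  have hφ : solitonProfile α β ω c = fun ξ => A * (Real.cosh (k * ξ))⁻¹ := by
    funext ξ
    show A * (1 / Real.cosh (Real.sqrt s * ξ / d)) = A * (Real.cosh (k * ξ))⁻¹
    rw [hk, one_div, div_mul_eq_mul_div]
  have hcoshpos : ∀ x : ℝ, 0 < Real.cosh x := Real.cosh_pos
  have hcoshne : ∀ x : ℝ, Real.cosh x ≠ 0 := fun x => (hcoshpos x).ne'
  -- first derivative
  have hf' : ∀ x : ℝ, HasDerivAt (fun ξ => A * (Real.cosh (k * ξ))⁻¹)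
      (A * (-(k * Real.sinh (k * x)) / (Real.cosh (k * x))^2)) x := by
    intro x
    have h1 : HasDerivAt (fun ξ : ℝ => k * ξ) k x := by
      simpa using (hasDerivAt_id x).const_mul k
    have h2 : HasDerivAt (fun ξ : ℝ => Real.cosh (k * ξ)) (Real.sinh (k * x) * k) x :=
      h1.cosh
    have h3 := h2.inv (hcoshne _)
    have := h3.const_mul A
    refine this.congr_deriv ?_
    ring
  -- second derivative
  have hg' : ∀ x : ℝ, HasDerivAt (fun ξ => A * (-(k * Real.sinh (k * ξ)) / (Real.cosh (k * ξ))^2))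
      (A * k^2 * ((Real.cosh (k * x))⁻¹ - 2 * ((Real.cosh (k * x))⁻¹)^3)) x := by
    intro x
    have h1 : HasDerivAt (fun ξ : ℝ => k * ξ) k x := by
      simpa using (hasDerivAt_id x).const_mul k
    have hu : HasDerivAt (fun ξ : ℝ => -(k * Real.sinh (k * ξ)))
        (-(k * (Real.cosh (k * x) * k))) x := ((h1.sinh).const_mul k).neg
    have hv : HasDerivAt (fun ξ : ℝ => (Real.cosh (k * ξ))^2)
        (2 * Real.cosh (k * x) * (Real.sinh (k * x) * k)) x := by
      have := (h1.cosh).pow 2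
      refine this.congr_deriv ?_
      norm_num
    have hdiv := hu.div hv (by positivity)
    have := hdiv.const_mul A
    refine this.congr_deriv ?_
    have hC := hcoshne (k * x)
    have hsc : Real.sinh (k * x)^2 = Real.cosh (k * x)^2 - 1 := by
      nlinarith [Real.cosh_sq_sub_sinh_sq (k * x)]
    field_simp
    linear_combination (2*k^2) * hsc
  refine ⟨?_, ⟨A, ?_⟩, ?_, ?_⟩
  · rw [hφ]
    exact contDiff_const.mul
      ((Real.contDiff_cosh.comp ((contDiff_id).const_smul k)).inv (fun x => hcoshne _))
  · intro ξ
    rw [hφ]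
    rw [abs_mul, abs_of_pos hApos, abs_of_pos (inv_pos.mpr (hcoshpos _))]
    calc A * (Real.cosh (k * ξ))⁻¹ ≤ A * 1 := by
          apply mul_le_mul_of_nonneg_left _ hApos.le
          rw [inv_le_one_iff₀]
          right; exact Real.one_le_cosh _
      _ = A := mul_one A
  · intro ξ
    rw [hφ]
    exact mul_pos hApos (inv_pos.mpr (hcoshpos _))
  · intro ξ
    have hder1 : deriv (solitonProfile α β ω c) =
        fun x => A * (-(k * Real.sinh (k * x)) / (Real.cosh (k * x))^2) := by
      funext x
      rw [hφ]
      exact (hf' x).deriv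
    have hder2 : deriv (deriv (solitonProfile α β ω c)) ξ =
        A * k^2 * ((Real.cosh (k * ξ))⁻¹ - 2 * ((Real.cosh (k * ξ))⁻¹)^3) := by
      rw [hder1]
      exact (hg' ξ).deriv
    rw [hder2, hφ]
    have hC := hcoshne (k * ξ)
    have hd' : d ≠ 0 := hd.ne'
    have hαβ : α - β * d ≠ 0 := hC2.ne'
    have key : (α - β * d) * A^2 = 2 * s := by
      rw [hAsq]; field_simp
    rw [hksq]
    field_simp
    linear_combination A * key
end

section
/- Assume condition (C). If ψ : ℝ → ℝ is twice continuously differentiable, strictly positive, satisfies equation (E) at every point, and ψ(x) → 0 as x → +∞ and as x → −∞, then there exists x₀ ∈ ℝ such that ψ(x) = φ_{ω,c}(x − x₀) for all x ∈ ℝ. -/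
open MeasureTheory Filter

open Set in

lemma lipF (a b R : ℝ) (ha : 0 ≤ a) (hb : 0 ≤ b) (hR : 0 ≤ R) :
    LipschitzOnWith (1 + a + 3*b*R^2).toNNReal
      (fun p : ℝ × ℝ => (p.2, a * p.1 - b * p.1^3))
      {p : ℝ × ℝ | |p.1| ≤ R ∧ |p.2| ≤ R} := by
  rw [lipschitzOnWith_iff_dist_le_mul]
  intro p hp q hq
  rw [Real.coe_toNNReal _ (by positivity), Prod.dist_eq]
  have hK1 : (1:ℝ) ≤ 1 + a + 3*b*R^2 := by nlinarith [sq_nonneg R]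
  apply max_le
  · calc dist p.2 q.2 ≤ dist p q := by rw [Prod.dist_eq]; exact le_max_right _ _
      _ ≤ (1 + a + 3*b*R^2) * dist p q := le_mul_of_one_le_left dist_nonneg hK1
  · obtain ⟨hp1, -⟩ := hp
    obtain ⟨hq1, -⟩ := hq
    obtain ⟨hp1a, hp1b⟩ := abs_le.mp hp1
    obtain ⟨hq1a, hq1b⟩ := abs_le.mp hq1
    have h1 : |p.1 - q.1| ≤ dist p q := by
      rw [← Real.dist_eq, Prod.dist_eq]; exact le_max_left _ _
    rw [Real.dist_eq]
    calc |a*p.1 - b*p.1^3 - (a*q.1 - b*q.1^3)|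
        ≤ (a + 3*b*R^2) * |p.1 - q.1| := by
          have he : a*p.1 - b*p.1^3 - (a*q.1 - b*q.1^3)
              = (a - b*(p.1^2 + p.1*q.1 + q.1^2)) * (p.1-q.1) := by ring
          rw [he, abs_mul]
          apply mul_le_mul_of_nonneg_right _ (abs_nonneg _)
          rw [abs_le]
          have e1 : (0:ℝ) ≤ (R - p.1) * (R + p.1) := mul_nonneg (by linarith) (by linarith)
          have e2 : (0:ℝ) ≤ (R - q.1) * (R + q.1) := mul_nonneg (by linarith) (by linarith)
          constructor <;> nlinarith [sq_nonneg (p.1 + q.1), sq_nonneg (p.1 - q.1)]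
      _ ≤ (a + 3*b*R^2) * dist p q := by
          apply mul_le_mul_of_nonneg_left h1 (by positivity)
      _ ≤ (1 + a + 3*b*R^2) * dist p q := by
          apply mul_le_mul_of_nonneg_right (by linarith) dist_nonneg
lemma alg (M r ch sh A B : ℝ) (hch : ch ≠ 0) (hsh : sh^2 = ch^2 - 1) (hr : r^2 = A)
    (hbm : B * M^3 = 2*A*M) :
    A * (M*(1/ch)) - B*(M*(1/ch))^3
      = (-(M*r)*(ch*r)*ch^2 - -(M*r)*sh*(2*ch^1*(sh*r))) / (ch^2)^2 := by
  field_simp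
  linear_combination (-2*M*r^2) * hsh + (2*M - M*ch^2) * hr + (-1) * hbm

noncomputable def Mc (a b : ℝ) : ℝ := Real.sqrt (2*a/b)
noncomputable def Phi (a b t : ℝ) : ℝ := Mc a b * (1 / Real.cosh (Real.sqrt a * t))
noncomputable def Phi' (a b t : ℝ) : ℝ :=
  -(Mc a b * Real.sqrt a) * Real.sinh (Real.sqrt a * t) / (Real.cosh (Real.sqrt a * t))^2

lemma hasDerivAt_Phi (a b t : ℝ) : HasDerivAt (Phi a b) (Phi' a b t) t := by
  have hlin : HasDerivAt (fun t : ℝ => Real.sqrt a * t) (Real.sqrt a) t := by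
    simpa using (hasDerivAt_id t).const_mul (Real.sqrt a)
  have hc : HasDerivAt (fun t : ℝ => Real.cosh (Real.sqrt a * t))
      (Real.sinh (Real.sqrt a * t) * Real.sqrt a) t :=
    (Real.hasDerivAt_cosh _).comp t hlin
  have h := ((hasDerivAt_const t (1:ℝ)).div hc (Real.cosh_pos _).ne').const_mul (Mc a b)
  refine h.congr_deriv ?_
  unfold Phi'
  have := (Real.cosh_pos (Real.sqrt a * t)).ne'
  field_simp
  ring

lemma hasDerivAt_Phi' (a b : ℝ) (ha : 0 < a) (hb : 0 < b) (t : ℝ) :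
    HasDerivAt (Phi' a b) (a * Phi a b t - b * (Phi a b t)^3) t := by
  have hlin : HasDerivAt (fun t : ℝ => Real.sqrt a * t) (Real.sqrt a) t := by
    simpa using (hasDerivAt_id t).const_mul (Real.sqrt a)
  have hs : HasDerivAt (fun t : ℝ => Real.sinh (Real.sqrt a * t))
      (Real.cosh (Real.sqrt a * t) * Real.sqrt a) t := (Real.hasDerivAt_sinh _).comp t hlin
  have hc : HasDerivAt (fun t : ℝ => Real.cosh (Real.sqrt a * t))
      (Real.sinh (Real.sqrt a * t) * Real.sqrt a) t := (Real.hasDerivAt_cosh _).comp t hlin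
  have hu : HasDerivAt (fun t : ℝ => -(Mc a b * Real.sqrt a) * Real.sinh (Real.sqrt a * t))
      (-(Mc a b * Real.sqrt a) * (Real.cosh (Real.sqrt a * t) * Real.sqrt a)) t :=
    hs.const_mul _
  have hv : HasDerivAt (fun t : ℝ => (Real.cosh (Real.sqrt a * t))^2)
      (2 * Real.cosh (Real.sqrt a * t)^1 * (Real.sinh (Real.sqrt a * t) * Real.sqrt a)) t :=
    hc.pow 2
  have h := hu.div hv (by positivity)
  refine h.congr_deriv ?_
  unfold Phi
  refine (alg (Mc a b) (Real.sqrt a) _ _ a b (Real.cosh_pos _).ne'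
    (by linarith [Real.cosh_sq (Real.sqrt a * t)]) (Real.sq_sqrt ha.le)
    (by unfold Mc
        rw [pow_succ, Real.sq_sqrt (by positivity : (0:ℝ) ≤ 2*a/b)]
        field_simp)).symm
lemma abs_sinh_lt_cosh (x : ℝ) : |Real.sinh x| < Real.cosh x := by
  have h := Real.cosh_sq x
  have hc := Real.cosh_pos x
  rw [abs_lt]
  constructor <;> nlinarith

lemma Phi_bounds (a b t : ℝ) (ha : 0 ≤ a) (hb : 0 ≤ b) :
    |Phi a b t| ≤ Mc a b ∧ |Phi' a b t| ≤ Mc a b * Real.sqrt a := by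
  have hM : 0 ≤ Mc a b := Real.sqrt_nonneg _
  have hc1 : 1 ≤ Real.cosh (Real.sqrt a * t) := Real.one_le_cosh _
  have hcp : 0 < Real.cosh (Real.sqrt a * t) := Real.cosh_pos _
  constructor
  · unfold Phi
    rw [abs_of_nonneg (by positivity)]
    calc Mc a b * (1 / Real.cosh (Real.sqrt a * t)) ≤ Mc a b * 1 := by
          apply mul_le_mul_of_nonneg_left _ hM
          rw [div_le_one hcp]; exact hc1
      _ = Mc a b := mul_one _
  · unfold Phi'
    rw [abs_div, abs_mul]
    have hsc := (abs_sinh_lt_cosh (Real.sqrt a * t)).le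
    have h1 : |(-(Mc a b * Real.sqrt a))| = Mc a b * Real.sqrt a := by
      rw [abs_neg, abs_of_nonneg (by positivity)]
    rw [h1]
    have h2 : |Real.cosh (Real.sqrt a * t) ^ 2| = Real.cosh (Real.sqrt a * t)^2 :=
      abs_of_nonneg (by positivity)
    rw [h2, div_le_iff₀ (by positivity)]
    calc Mc a b * Real.sqrt a * |Real.sinh (Real.sqrt a * t)|
        ≤ Mc a b * Real.sqrt a * (Real.cosh (Real.sqrt a * t) * Real.cosh (Real.sqrt a * t)) := by
          apply mul_le_mul_of_nonneg_left _ (by positivity)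
          nlinarith [abs_nonneg (Real.sinh (Real.sqrt a * t))]
      _ = Mc a b * Real.sqrt a * Real.cosh (Real.sqrt a * t)^2 := by ring

set_option maxHeartbeats 1000000 in
lemma main_lemma (a b : ℝ) (ha : 0 < a) (hb : 0 < b) (ψ : ℝ → ℝ)
    (hψ : ContDiff ℝ 2 ψ) (hpos : ∀ x, 0 < ψ x)
    (hode : ∀ x, deriv (deriv ψ) x = a * ψ x - b * (ψ x)^3)
    (htop : Tendsto ψ atTop (nhds 0)) (hbot : Tendsto ψ atBot (nhds 0)) :
    ∃ x₀ : ℝ, ∀ x, ψ x = Phi a b (x - x₀) := by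
  -- differentiability structure
  have hψ2 : ContDiff ℝ (1+1) ψ := by
    rw [show ((1:WithTop ℕ∞) + 1) = 2 by norm_num]
    exact hψ
  have hc1 : ContDiff ℝ 1 (deriv ψ) := (contDiff_succ_iff_deriv.mp hψ2).2.2
  have hdiff : Differentiable ℝ ψ := hψ.differentiable (by norm_num)
  have hdiff' : Differentiable ℝ (deriv ψ) := hc1.differentiable one_ne_zero
  have hd1 : ∀ x, HasDerivAt ψ (deriv ψ x) x := fun x => (hdiff x).hasDerivAt
  have hd2 : ∀ x, HasDerivAt (deriv ψ) (a * ψ x - b * (ψ x)^3) x := fun x => by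
    have := (hdiff' x).hasDerivAt
    rwa [hode x] at this
  -- energy
  set E : ℝ → ℝ := fun x => (deriv ψ x)^2 - a*(ψ x)^2 + b/2*(ψ x)^4 with hEdef
  have hE : ∀ x, HasDerivAt E 0 x := by
    intro x
    have h1 := (hd2 x).pow 2
    have h2 := ((hd1 x).pow 2).const_mul a
    have h3 := ((hd1 x).pow 4).const_mul (b/2)
    have h := (h1.sub h2).add h3
    refine h.congr_deriv ?_
    push_cast
    ring
  have hEconst : ∀ x, E x = E 0 := by
    intro x
    exact is_const_of_deriv_eq_zero (fun y => (hE y).differentiableAt)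
      (fun y => (hE y).deriv) x 0
  -- limit of (ψ')²
  have htend0 : Tendsto (fun x => a*(ψ x)^2 - b/2*(ψ x)^4) atTop (nhds 0) := by
    have hcont : Continuous fun y : ℝ => a*y^2 - b/2*y^4 := by continuity
    have h := (hcont.tendsto 0).comp htop
    simpa [Function.comp_def] using h
  have hsq : ∀ x, (deriv ψ x)^2 = E 0 + (a*(ψ x)^2 - b/2*(ψ x)^4) := by
    intro x
    have h := hEconst x
    simp only [hEdef] at h ⊢
    linarith
  have htendsq : Tendsto (fun x => (deriv ψ x)^2) atTop (nhds (E 0)) := by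
    simp only [hsq]
    simpa using tendsto_const_nhds.add htend0
  have hE0nn : 0 ≤ E 0 :=
    ge_of_tendsto htendsq (Eventually.of_forall fun x => sq_nonneg _)
  have hE0 : E 0 = 0 := by
    by_contra hne
    have hE0pos : 0 < E 0 := hE0nn.lt_of_ne (Ne.symm hne)
    set δ := Real.sqrt (E 0 / 2) with hδdef
    have hδpos : 0 < δ := Real.sqrt_pos.mpr (half_pos hE0pos)
    have hδ2 : δ^2 = E 0 / 2 := Real.sq_sqrt (half_pos hE0pos).le
    have h1 : ∀ᶠ x in atTop, E 0 / 2 ≤ (deriv ψ x)^2 :=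
      htendsq.eventually (eventually_ge_nhds (half_lt_self hE0pos))
    have h2 : ∀ᶠ x in atTop, ψ x < δ/2 :=
      htop.eventually (eventually_lt_nhds (half_pos hδpos))
    obtain ⟨X, hX⟩ := (h1.and h2).exists_forall_of_atTop
    obtain ⟨ξ, hξmem, hξ⟩ := exists_hasDerivAt_eq_slope ψ (deriv ψ)
      (by linarith : X < X + 1) (hψ.continuous.continuousOn)
      (fun x _ => hd1 x)
    have hξX : X ≤ ξ := hξmem.1.le
    have hA := (hX ξ hξX).1
    have hB := (hX X le_rfl).2
    have hC := (hX (X+1) (by linarith)).2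
    have hpB := hpos X
    have hpC := hpos (X+1)
    rw [show X + 1 - X = 1 by ring, div_one] at hξ
    nlinarith [hA, hξ]
  have hEid : ∀ x, (deriv ψ x)^2 = a*(ψ x)^2 - b/2*(ψ x)^4 := by
    intro x; rw [hsq x, hE0]; ring
  -- bounds
  have hM2 : (Mc a b)^2 = 2*a/b := Real.sq_sqrt (by positivity)
  have hMpos : 0 < Mc a b := Real.sqrt_pos.mpr (by positivity)
  have hr2 : (Real.sqrt a)^2 = a := Real.sq_sqrt ha.le
  have hrpos : 0 < Real.sqrt a := Real.sqrt_pos.mpr ha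
  have hψle : ∀ x, ψ x ≤ Mc a b := by
    intro x
    have h := hEid x
    have hp := hpos x
    have hx2 : (ψ x)^2 ≤ (Mc a b)^2 := by
      rw [hM2]
      have hnn : 0 ≤ a * ψ x ^ 2 - b / 2 * ψ x ^ 4 := by
        rw [← h]; exact sq_nonneg _
      rw [le_div_iff₀ hb]
      nlinarith [mul_pos hp hp]
    nlinarith [mul_pos hp hMpos]
  have hψ'le : ∀ x, |deriv ψ x| ≤ Mc a b * Real.sqrt a := by
    intro x
    have h := hEid x
    have hp := hpos x
    have hle := hψle x
    have h2 : (deriv ψ x)^2 ≤ (Mc a b * Real.sqrt a)^2 := by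
      have he : (Mc a b * Real.sqrt a)^2 = a * (Mc a b)^2 := by
        rw [mul_pow, hr2]; ring
      have e1 : (ψ x)^2 ≤ (Mc a b)^2 := by nlinarith
      have e2 : a * (ψ x)^2 ≤ a * (Mc a b)^2 := mul_le_mul_of_nonneg_left e1 ha.le
      have e3 : 0 ≤ b / 2 * (ψ x)^4 := by positivity
      rw [he]
      linarith [h]
    calc |deriv ψ x| = Real.sqrt ((deriv ψ x)^2) := (Real.sqrt_sq_eq_abs _).symm
      _ ≤ Real.sqrt ((Mc a b * Real.sqrt a)^2) := Real.sqrt_le_sqrt h2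
      _ = Mc a b * Real.sqrt a := Real.sqrt_sq (by positivity)
  -- maximum point
  obtain ⟨m, hm⟩ : ∃ m, ∀ y, ψ y ≤ ψ m := by
    apply Continuous.exists_forall_ge' hψ.continuous 0
    rw [cocompact_eq_atBot_atTop, eventually_sup]
    exact ⟨hbot.eventually_le_const (hpos 0), htop.eventually_le_const (hpos 0)⟩
  have hm' : deriv ψ m = 0 := by
    have hmax : IsMaxOn ψ Set.univ m := fun y _ => hm y
    exact (hmax.isLocalMax Filter.univ_mem).deriv_eq_zero
  have hψm : ψ m = Mc a b := by
    have h := hEid m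
    rw [hm'] at h
    have hp := hpos m
    have h2 : (ψ m)^2 = 2*a/b := by
      have hbne : b ≠ 0 := hb.ne'
      rw [eq_div_iff hbne]
      nlinarith [mul_pos hp hp]
    calc ψ m = Real.sqrt ((ψ m)^2) := (Real.sqrt_sq hp.le).symm
      _ = Mc a b := by rw [h2]; rfl
  -- uniqueness of the ODE
  refine ⟨m, fun x => ?_⟩
  set R : ℝ := Mc a b * (1 + Real.sqrt a) + 1 with hRdef
  have hR0 : 0 ≤ R := by positivity
  set S : Set (ℝ × ℝ) := {p : ℝ × ℝ | |p.1| ≤ R ∧ |p.2| ≤ R} with hSdef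
  set v : ℝ → ℝ × ℝ → ℝ × ℝ := fun _ p => (p.2, a * p.1 - b * p.1^3) with hvdef
  have hlip : ∀ t : ℝ, LipschitzOnWith (1 + a + 3*b*R^2).toNNReal (v t) S :=
    fun _ => lipF a b R ha.le hb.le hR0
  have hfS : ∀ t : ℝ, ((ψ t, deriv ψ t) : ℝ × ℝ) ∈ S := by
    intro t
    constructor
    · have := hψle t; have := (hpos t).le
      rw [abs_of_nonneg (hpos t).le]
      nlinarith [hrpos.le, hMpos.le]
    · have := hψ'le t
      have : |deriv ψ t| ≤ Mc a b * Real.sqrt a := this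
      nlinarith [hMpos.le, hrpos.le, abs_nonneg (deriv ψ t)]
  have hgS : ∀ t : ℝ, ((Phi a b (t - m), Phi' a b (t - m)) : ℝ × ℝ) ∈ S := by
    intro t
    obtain ⟨hg1, hg2⟩ := Phi_bounds a b (t - m) ha.le hb.le
    constructor
    · nlinarith [hMpos.le, hrpos.le]
    · nlinarith [hMpos.le, hrpos.le]
  have hfd : ∀ t : ℝ, HasDerivAt (fun t => ((ψ t, deriv ψ t) : ℝ × ℝ))
      (v t (ψ t, deriv ψ t)) t := fun t => (hd1 t).prodMk (hd2 t)
  have hgd : ∀ t : ℝ, HasDerivAt (fun t => ((Phi a b (t - m), Phi' a b (t - m)) : ℝ × ℝ))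
      (v t (Phi a b (t - m), Phi' a b (t - m))) t := by
    intro t
    have hsub : HasDerivAt (fun t : ℝ => t - m) 1 t := (hasDerivAt_id t).sub_const m
    have h1 : HasDerivAt (fun t : ℝ => Phi a b (t - m)) (Phi' a b (t - m)) t := by
      have := (hasDerivAt_Phi a b (t - m)).comp t hsub
      simpa [Function.comp_def] using this
    have h2 : HasDerivAt (fun t : ℝ => Phi' a b (t - m))
        (a * Phi a b (t - m) - b * (Phi a b (t - m))^3) t := by
      have := (hasDerivAt_Phi' a b ha hb (t - m)).comp t hsub
      simpa [Function.comp_def] using this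
    exact h1.prodMk h2
  have heq0 : ((ψ m, deriv ψ m) : ℝ × ℝ) = ((Phi a b (m - m), Phi' a b (m - m)) : ℝ × ℝ) := by
    have e1 : Phi a b (m - m) = Mc a b := by
      rw [sub_self]
      unfold Phi
      rw [mul_zero, Real.cosh_zero]
      norm_num
    have e2 : Phi' a b (m - m) = 0 := by
      rw [sub_self]
      unfold Phi'
      rw [mul_zero, Real.sinh_zero]
      ring
    rw [e1, e2, hm', hψm]
  have hmem : m ∈ Set.Ioo (min x m - 1) (max x m + 1) :=
    ⟨by have := min_le_right x m; linarith, by have := le_max_right x m; linarith⟩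
  have huniq := ODE_solution_unique_of_mem_Icc (v := v) (s := fun _ => S)
    (K := (1 + a + 3*b*R^2).toNNReal) (fun t _ => hlip t) hmem
    (continuousOn_of_forall_continuousAt fun t _ => (hfd t).continuousAt)
    (fun t _ => hfd t) (fun t _ => hfS t)
    (continuousOn_of_forall_continuousAt fun t _ => (hgd t).continuousAt)
    (fun t _ => hgd t) (fun t _ => hgS t)
    heq0
  have hx : x ∈ Set.Icc (min x m - 1) (max x m + 1) :=
    ⟨by have := min_le_left x m; linarith, by have := le_max_left x m; linarith⟩
  have := huniq hx
  exact congrArg Prod.fst this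

theorem stmt1 (α β ω c : ℝ) (hβ : β ≠ 0) (hc : |c| < 1)
    (hC1 : 1 - c^2 - ω^2 > 0) (hC2 : α - β * (1 - c^2) > 0)
    (ψ : ℝ → ℝ) (hψ : ContDiff ℝ 2 ψ) (hpos : ∀ x : ℝ, 0 < ψ x)
    (hode : ∀ x : ℝ,
      deriv (deriv ψ) x - ((1 - c^2 - ω^2) / (1 - c^2)^2) * ψ x
        + ((α - β * (1 - c^2)) / (1 - c^2)^2) * (ψ x)^3 = 0)
    (htop : Tendsto ψ atTop (nhds 0)) (hbot : Tendsto ψ atBot (nhds 0)) :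
    ∃ x₀ : ℝ, ∀ x : ℝ, ψ x = solitonProfile α β ω c (x - x₀) := by
  have h1c : (0:ℝ) < 1 - c^2 := by nlinarith [sq_abs c, abs_nonneg c]
  set a := (1 - c^2 - ω^2)/(1-c^2)^2 with hadef
  set b := (α - β*(1-c^2))/(1-c^2)^2 with hbdef
  have ha : 0 < a := div_pos hC1 (by positivity)
  have hb : 0 < b := div_pos hC2 (by positivity)
  have hode' : ∀ x, deriv (deriv ψ) x = a * ψ x - b * (ψ x)^3 := fun x => by
    have := hode x; linarith
  obtain ⟨x₀, hx⟩ := main_lemma a b ha hb ψ hψ hpos hode' htop hbot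
  refine ⟨x₀, fun x => ?_⟩
  rw [hx x]
  unfold Phi Mc solitonProfile
  have e1 : 2*a/b = 2 * (1 - c^2 - ω^2) / (α - β * (1 - c^2)) := by
    rw [hadef, hbdef]
    have h4 : ((1:ℝ) - c ^ 2) ^ 2 ≠ 0 := by positivity
    field_simp
  have e2 : Real.sqrt a = Real.sqrt (1 - c^2 - ω^2) / (1 - c^2) := by
    rw [hadef, Real.sqrt_div hC1.le, Real.sqrt_sq h1c.le]
  rw [e1, e2]
  congr 2
  ring
end

section
/- Assume condition (C) and set I = (1−c²−ω²)/(1−c²)². Let Φ : ℝ → ℝ be twice continuously differentiable, satisfy equation (E) at every point, and suppose that ∫_ℝ Φ(x)² dx < ∞ and ∫_ℝ Φ'(x)² dx < ∞. Then for every ε with 0 < ε < 1 the function x ↦ e^{ε·√I·|x|}·(|Φ(x)| + |Φ'(x)|) is bounded on ℝ. -/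
open MeasureTheory Filter Set

lemma aux_lim_zero_top (f : ℝ → ℝ) (hf : Integrable f) {L : ℝ}
    (h : Tendsto f atTop (nhds L)) : L = 0 := by
  by_contra hL
  have hpos : 0 < |L| / 2 := by positivity
  have hev : ∀ᶠ x in atTop, |L| / 2 ≤ |f x| :=
    h.abs.eventually (eventually_ge_nhds (by linarith))
  obtain ⟨X, hX⟩ := hev.exists_forall_of_atTop
  have hconst : Integrable (fun _ : ℝ => |L| / 2) (volume.restrict (Ici X)) := by
    refine Integrable.mono' (g := fun x => |f x|) hf.abs.integrableOn
      aestronglyMeasurable_const ?_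
    filter_upwards [ae_restrict_mem measurableSet_Ici] with x hx
    simpa [abs_of_pos hpos] using hX x hx
  rw [integrable_const_iff] at hconst
  rcases hconst with h1 | h2
  · have : |L| = 0 := by linarith
    exact hL (abs_eq_zero.mp this)
  · have h2 := h2.measure_univ_lt_top
    simp [Measure.restrict_apply_univ, Real.volume_Ici] at h2

lemma aux_lim_zero_bot (f : ℝ → ℝ) (hf : Integrable f) {L : ℝ}
    (h : Tendsto f atBot (nhds L)) : L = 0 := by
  apply aux_lim_zero_top (fun x => f (-x))
  · have : (fun x : ℝ => f (-x)) = f ∘ (fun x => -x) := rfl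
    rw [this]
    exact (Integrable.comp_neg hf)
  · exact h.comp tendsto_neg_atTop_atBot

lemma aux_tendsto_top (f : ℝ → ℝ) (hd : Differentiable ℝ f)
    (hc : Continuous (deriv f)) (hi : Integrable (deriv f)) :
    ∃ L, Tendsto f atTop (nhds L) := by
  refine ⟨f 0 + ∫ t in Ioi (0:ℝ), deriv f t, ?_⟩
  have key : ∀ x : ℝ, f x = f 0 + ∫ t in (0:ℝ)..x, deriv f t := by
    intro x
    rw [intervalIntegral.integral_deriv_eq_sub (fun y _ => hd y)
      (hc.intervalIntegrable 0 x)]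
    ring
  have h2 : Tendsto (fun x : ℝ => ∫ t in (0:ℝ)..x, deriv f t) atTop
      (nhds (∫ t in Ioi (0:ℝ), deriv f t)) :=
    intervalIntegral_tendsto_integral_Ioi 0 hi.integrableOn tendsto_id
  have := (tendsto_const_nhds (x := f 0)).add h2
  refine this.congr fun x => (key x).symm

lemma aux_tendsto_bot (f : ℝ → ℝ) (hd : Differentiable ℝ f)
    (hc : Continuous (deriv f)) (hi : Integrable (deriv f)) :
    ∃ L, Tendsto f atBot (nhds L) := by
  refine ⟨f 0 - ∫ t in Iic (0:ℝ), deriv f t, ?_⟩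
  have key : ∀ x : ℝ, f x = f 0 - ∫ t in x..(0:ℝ), deriv f t := by
    intro x
    rw [intervalIntegral.integral_deriv_eq_sub (fun y _ => hd y)
      (hc.intervalIntegrable x 0)]
    ring
  have h2 : Tendsto (fun x : ℝ => ∫ t in x..(0:ℝ), deriv f t) atBot
      (nhds (∫ t in Iic (0:ℝ), deriv f t)) :=
    intervalIntegral_tendsto_integral_Iic 0 hi.integrableOn tendsto_id
  have := (tendsto_const_nhds (x := f 0)).sub h2
  refine this.congr fun x => (key x).symm

lemma aux_abs_le_of_sq_le {u v : ℝ} (h : u^2 ≤ v^2) (hv : 0 ≤ v) : |u| ≤ v := by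
  nlinarith [sq_abs u, abs_nonneg u]

set_option maxHeartbeats 2000000 in
lemma decay_main (a b : ℝ) (ha : 0 < a) (hb : 0 < b) (Φ : ℝ → ℝ) (hΦ : ContDiff ℝ 2 Φ)
    (hode : ∀ x, deriv (deriv Φ) x = a * Φ x - b * Φ x ^ 3)
    (hL2 : Integrable (fun x : ℝ => Φ x ^ 2))
    (hL2' : Integrable (fun x : ℝ => deriv Φ x ^ 2))
    (ε : ℝ) (hε0 : 0 < ε) (hε1 : ε < 1) :
    ∃ M : ℝ, ∀ x : ℝ,
      Real.exp (ε * Real.sqrt a * |x|) * (|Φ x| + |deriv Φ x|) ≤ M := by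
  set d : ℝ → ℝ := deriv Φ with hd_def
  have hΦdiff : Differentiable ℝ Φ := hΦ.differentiable (by norm_num)
  have hd1 : ContDiff ℝ 1 d := by
    have h2 : ContDiff ℝ ((1:ℕ) + 1) Φ := by norm_num; exact hΦ
    exact (contDiff_succ_iff_deriv.mp h2).2.2
  have hddiff : Differentiable ℝ d := hd1.differentiable (by norm_num)
  have hΦcont : Continuous Φ := hΦ.continuous
  have hdcont : Continuous d := hd1.continuous
  have hΦ' : ∀ x, HasDerivAt Φ (d x) x := fun x => (hΦdiff x).hasDerivAt
  have hd' : ∀ x, HasDerivAt d (a * Φ x - b * Φ x ^ 3) x := fun x => by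
    have := (hddiff x).hasDerivAt
    rwa [show deriv d x = a * Φ x - b * Φ x ^ 3 from hode x] at this
  set g : ℝ → ℝ := fun x => Φ x ^ 2 with hg_def
  have hgcont : Continuous g := by fun_prop
  have hg' : ∀ x, HasDerivAt g (2 * Φ x * d x) x := fun x => by
    have := (hΦ' x).fun_pow 2
    refine this.congr_deriv ?_; push_cast; ring
  set gp : ℝ → ℝ := fun x => 2 * Φ x * d x with hgp_def
  have hgpcont : Continuous gp := by unfold gp; fun_prop
  have hgp_bound : ∀ x, |gp x| ≤ Φ x ^ 2 + d x ^ 2 := by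
    intro x
    have h1 : |gp x| = 2 * |Φ x| * |d x| := by
      rw [hgp_def]; rw [abs_mul, abs_mul]; simp [abs_of_nonneg, abs_two]
    rw [h1]
    nlinarith [sq_abs (Φ x), sq_abs (d x), sq_nonneg (|Φ x| - |d x|)]
  have hgpint : Integrable gp := by
    refine (hL2.add hL2').mono' hgpcont.aestronglyMeasurable (ae_of_all _ fun x => ?_)
    simpa [Real.norm_eq_abs] using hgp_bound x
  have hderivg : deriv g = gp := funext fun x => (hg' x).deriv
  have hgdiff : Differentiable ℝ g := fun x => ((hg' x).differentiableAt)
  have gtop : Tendsto g atTop (nhds 0) := by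
    obtain ⟨L, hL⟩ := aux_tendsto_top g hgdiff (hderivg ▸ hgpcont) (hderivg ▸ hgpint)
    rwa [aux_lim_zero_top g hL2 hL] at hL
  have gbot : Tendsto g atBot (nhds 0) := by
    obtain ⟨L, hL⟩ := aux_tendsto_bot g hgdiff (hderivg ▸ hgpcont) (hderivg ▸ hgpint)
    rwa [aux_lim_zero_bot g hL2 hL] at hL
  -- boundedness of g hence Φ
  have hgB : ∃ B : ℝ, 0 ≤ B ∧ ∀ x, g x ≤ B := by
    obtain ⟨X1, hX1⟩ := (gtop.eventually (eventually_le_nhds one_pos)).exists_forall_of_atTop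
    obtain ⟨X2, hX2⟩ := (gbot.eventually (eventually_le_nhds one_pos)).exists_forall_of_atBot
    obtain ⟨C, hC⟩ := (isCompact_Icc (a := X2) (b := X1)).exists_bound_of_continuousOn
      hgcont.continuousOn
    refine ⟨max 1 C, le_max_of_le_left one_pos.le, fun x => ?_⟩
    rcases le_or_gt X1 x with h | h
    · exact le_max_of_le_left (hX1 x h)
    rcases le_or_gt x X2 with h' | h'
    · exact le_max_of_le_left (hX2 x h')
    · exact le_max_of_le_right (le_trans (le_abs_self _) (hC x ⟨h'.le, h.le⟩))
  obtain ⟨B2, hB2_0, hB2⟩ := hgB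
  set B := Real.sqrt B2 with hB_def
  have hB0 : 0 ≤ B := Real.sqrt_nonneg _
  have hBB : B ^ 2 = B2 := Real.sq_sqrt hB2_0
  have hΦB : ∀ x, |Φ x| ≤ B := fun x =>
    aux_abs_le_of_sq_le (by rw [hBB]; exact hB2 x) hB0
  -- d^2 tends to zero
  have hd2' : ∀ x, HasDerivAt (fun y => d y ^ 2) (2 * d x * (a * Φ x - b * Φ x ^ 3)) x := by
    intro x
    have := (hd' x).fun_pow 2
    refine this.congr_deriv ?_; push_cast; ring
  set K : ℝ := a + b * B ^ 2 with hK_def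
  have hK0 : 0 < K := by positivity
  have hcubic : ∀ x, |a * Φ x - b * Φ x ^ 3| ≤ K * |Φ x| := by
    intro x
    have h1 := abs_sub (a * Φ x) (b * Φ x ^ 3)
    have h2 : |a * Φ x| = a * |Φ x| := by rw [abs_mul, abs_of_pos ha]
    have h3 : |b * Φ x ^ 3| = b * |Φ x| ^ 3 := by
      rw [abs_mul, abs_of_pos hb, abs_pow]
    rw [hK_def]
    nlinarith [mul_nonneg (mul_nonneg (abs_nonneg (Φ x)) (sub_nonneg.mpr (hΦB x)))
      (add_nonneg hB0 (abs_nonneg (Φ x))), hΦB x, abs_nonneg (Φ x)]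
  have hd2c : Continuous (fun x => 2 * d x * (a * Φ x - b * Φ x ^ 3)) := by
    fun_prop
  have hd2int : Integrable (fun x => 2 * d x * (a * Φ x - b * Φ x ^ 3)) := by
    refine ((hL2.add hL2').const_mul K).mono'
      hd2c.aestronglyMeasurable (ae_of_all _ fun x => ?_)
    have h1 : ‖2 * d x * (a * Φ x - b * Φ x ^ 3)‖ = 2 * |d x| * |a * Φ x - b * Φ x ^ 3| := by
      rw [Real.norm_eq_abs, abs_mul, abs_mul, abs_two]
    simp only [Pi.add_apply]
    rw [h1]
    have h2 := hcubic x
    have h3 := two_mul_le_add_sq |Φ x| |d x|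
    have h4 := mul_le_mul_of_nonneg_left h2 (by positivity : (0:ℝ) ≤ 2 * |d x|)
    have h5 := mul_le_mul_of_nonneg_left h3 hK0.le
    have h6 : g x = Φ x ^ 2 := rfl
    nlinarith [sq_abs (Φ x), sq_abs (d x)]
  have hderivd2 : deriv (fun y => d y ^ 2) = fun x => 2 * d x * (a * Φ x - b * Φ x ^ 3) :=
    funext fun x => (hd2' x).deriv
  have hd2diff : Differentiable ℝ (fun y => d y ^ 2) := fun x => (hd2' x).differentiableAt
  have d2top : Tendsto (fun x => d x ^ 2) atTop (nhds 0) := by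
    obtain ⟨L, hL⟩ := aux_tendsto_top _ hd2diff (hderivd2 ▸ hd2c) (hderivd2 ▸ hd2int)
    rwa [aux_lim_zero_top _ hL2' hL] at hL
  have d2bot : Tendsto (fun x => d x ^ 2) atBot (nhds 0) := by
    obtain ⟨L, hL⟩ := aux_tendsto_bot _ hd2diff (hderivd2 ▸ hd2c) (hderivd2 ▸ hd2int)
    rwa [aux_lim_zero_bot _ hL2' hL] at hL
  -- Φ^4 tends to zero
  have g4top : Tendsto (fun x => Φ x ^ 4) atTop (nhds 0) := by
    have := gtop.mul gtop
    rw [mul_zero] at this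
    exact this.congr fun x => by simp only [hg_def]; ring
  have g4bot : Tendsto (fun x => Φ x ^ 4) atBot (nhds 0) := by
    have := gbot.mul gbot
    rw [mul_zero] at this
    exact this.congr fun x => by simp only [hg_def]; ring
  -- the conserved energy is zero
  set E : ℝ → ℝ := fun x => d x ^ 2 - a * Φ x ^ 2 + (b/2) * Φ x ^ 4 with hE_def
  have hE' : ∀ x, HasDerivAt E 0 x := by
    intro x
    have h1 := hd2' x
    have h2 : HasDerivAt (fun y => a * Φ y ^ 2) (a * (2 * Φ x * d x)) x :=
      (hg' x).const_mul a
    have h3 : HasDerivAt (fun y => Φ y ^ 4) (4 * Φ x ^ 3 * d x) x := by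
      simpa using (hΦ' x).fun_pow 4
    have := (h1.fun_sub h2).fun_add (h3.const_mul (b/2))
    refine this.congr_deriv ?_
    ring
  have hEconst : ∀ x y, E x = E y :=
    is_const_of_deriv_eq_zero (fun x => (hE' x).differentiableAt) (fun x => (hE' x).deriv)
  have hEtop : Tendsto E atTop (nhds 0) := by
    have := (d2top.sub (gtop.const_mul a)).add (g4top.const_mul (b/2))
    simp only [mul_zero, sub_zero, add_zero, zero_sub, neg_zero] at this
    exact this.congr fun x => by simp only [hE_def, hg_def]
  have hE0 : ∀ x, E x = 0 := by
    intro x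
    have h1 : Tendsto (fun _ : ℝ => E x) atTop (nhds 0) :=
      hEtop.congr fun y => hEconst y x
    exact (tendsto_nhds_unique h1 tendsto_const_nhds).symm
  have hEsq : ∀ x, d x ^ 2 = a * Φ x ^ 2 - (b/2) * Φ x ^ 4 := by
    intro x
    have := hE0 x
    simp only [hE_def] at this
    linarith
  have hdle : ∀ x, |d x| ≤ Real.sqrt a * |Φ x| := by
    intro x
    refine aux_abs_le_of_sq_le ?_ (by positivity)
    have hsq : Real.sqrt a ^ 2 = a := Real.sq_sqrt ha.le
    have h1 := hEsq x
    have h2 : (Real.sqrt a * |Φ x|) ^ 2 = a * Φ x ^ 2 := by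
      rw [mul_pow, hsq, sq_abs]
    rw [h2]
    nlinarith [sq_nonneg (Φ x ^ 2)]
  -- second derivative of g
  have hg'' : ∀ x, HasDerivAt gp (4 * a * g x - 3 * b * g x ^ 2) x := by
    intro x
    have h1 : HasDerivAt (fun y => 2 * Φ y) (2 * d x) x := (hΦ' x).const_mul 2
    have h2 := h1.fun_mul (hd' x)
    refine h2.congr_deriv ?_
    simp only [hg_def]
    have := hEsq x
    nlinarith [hEsq x]
  -- g' tends to zero
  have gptop : Tendsto gp atTop (nhds 0) := by
    refine squeeze_zero_norm (a := fun x => Φ x ^ 2 + d x ^ 2)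
      (fun x => by rw [Real.norm_eq_abs]; exact hgp_bound x) ?_
    have := gtop.add d2top
    rw [add_zero] at this
    exact this.congr fun x => by simp [hg_def]
  have gpbot : Tendsto gp atBot (nhds 0) := by
    refine squeeze_zero_norm (a := fun x => Φ x ^ 2 + d x ^ 2)
      (fun x => by rw [Real.norm_eq_abs]; exact hgp_bound x) ?_
    have := gbot.add d2bot
    rw [add_zero] at this
    exact this.congr fun x => by simp [hg_def]
  -- the decay constant
  set k : ℝ := 2 * ε * Real.sqrt a with hk_def
  have hsa0 : 0 < Real.sqrt a := Real.sqrt_pos.mpr ha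
  have hk0 : 0 < k := by rw [hk_def]; positivity
  have hk2 : k ^ 2 = 4 * ε^2 * a := by
    rw [hk_def, mul_pow, mul_pow, Real.sq_sqrt ha.le]; ring
  have hε2 : 0 < 1 - ε^2 := by nlinarith
  set δ : ℝ := 4 * a * (1 - ε^2) / (3 * b) with hδ_def
  have hδ0 : 0 < δ := by rw [hδ_def]; apply div_pos (by nlinarith) (by positivity)
  obtain ⟨R1, hR1⟩ := (gtop.eventually (eventually_le_nhds hδ0)).exists_forall_of_atTop
  obtain ⟨R2, hR2⟩ := (gbot.eventually (eventually_le_nhds hδ0)).exists_forall_of_atBot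
  set R : ℝ := max 1 (max R1 (-R2)) with hR_def
  have hR0 : 0 < R := lt_of_lt_of_le one_pos (le_max_left _ _)
  have hsmall : ∀ x : ℝ, R ≤ |x| → g x ≤ δ := by
    intro x hx
    rcases le_abs.mp hx with h | h
    · exact hR1 x (le_trans (le_trans (le_max_left R1 _) (le_max_right 1 _)) h)
    · refine hR2 x ?_
      have h1 : -R2 ≤ R := le_trans (le_max_right R1 _) (le_max_right 1 _)
      linarith
  have hgnn : ∀ x : ℝ, 0 ≤ g x := by intro x; simp only [hg_def]; positivity
  have hkey : ∀ x : ℝ, R ≤ |x| → k^2 * g x ≤ 4 * a * g x - 3 * b * g x ^ 2 := by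
    intro x hx
    have h1 := hsmall x hx
    have h2 := hgnn x
    rw [hk2]
    rw [hδ_def, le_div_iff₀ (by positivity : (0:ℝ) < 3*b)] at h1
    nlinarith [mul_le_mul_of_nonneg_right h1 h2]
  -- right-hand side decay
  have hFder : ∀ x, HasDerivAt (fun y => Real.exp (-(k*y)) * (gp y + k * g y))
      (Real.exp (-(k*x)) * ((4*a*g x - 3*b*g x^2) - k^2 * g x)) x := by
    intro x
    have h1 : HasDerivAt (fun y : ℝ => -(k*y)) (-k) x := by
      simpa using ((hasDerivAt_id x).const_mul k).fun_neg
    have he : HasDerivAt (fun y : ℝ => Real.exp (-(k*y))) (Real.exp (-(k*x)) * (-k)) x :=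
      h1.exp
    have hin : HasDerivAt (fun y => gp y + k * g y)
        ((4*a*g x - 3*b*g x^2) + k * (2 * Φ x * d x)) x :=
      (hg'' x).add ((hg' x).const_mul k)
    have := he.fun_mul hin
    refine this.congr_deriv ?_
    simp only [hgp_def]
    ring
  set F : ℝ → ℝ := fun y => Real.exp (-(k*y)) * (gp y + k * g y) with hF_def
  have hFcont : Continuous F := by rw [hF_def]; unfold gp; fun_prop
  have hFmono : MonotoneOn F (Ici R) := by
    apply monotoneOn_of_deriv_nonneg (convex_Ici R) hFcont.continuousOn
    · intro x _; exact ((hFder x).differentiableAt).differentiableWithinAt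
    · intro x hx
      rw [interior_Ici] at hx
      rw [(hFder x).deriv]
      have hxR : R ≤ |x| := by
        rw [abs_of_pos (lt_trans hR0 hx)]; exact hx.le
      have h1 := hkey x hxR
      have h2 := (Real.exp_pos (-(k*x))).le
      nlinarith
  have hexp_top : Tendsto (fun x : ℝ => Real.exp (-(k*x))) atTop (nhds 0) := by
    apply Real.tendsto_exp_atBot.comp
    exact tendsto_neg_atTop_atBot.comp (Tendsto.const_mul_atTop hk0 tendsto_id)
  have hFtop : Tendsto F atTop (nhds 0) := by
    have h2 : Tendsto (fun x => gp x + k * g x) atTop (nhds 0) := by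
      have := gptop.add (gtop.const_mul k); simpa using this
    have := hexp_top.mul h2; simpa using this
  have hFle : ∀ x ∈ Ici R, gp x + k * g x ≤ 0 := by
    intro x hx
    have h1 : F x ≤ 0 := by
      refine ge_of_tendsto hFtop ?_
      filter_upwards [eventually_ge_atTop x] with y hy
      exact hFmono hx (le_trans hx hy : y ∈ Ici R) hy
    simp only [hF_def] at h1
    have h2 := Real.exp_pos (-(k*x))
    nlinarith
  have hGder : ∀ x, HasDerivAt (fun y => Real.exp (k*y) * g y)
      (Real.exp (k*x) * (gp x + k * g x)) x := by
    intro x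
    have h1 : HasDerivAt (fun y : ℝ => k*y) k x := by
      simpa using (hasDerivAt_id x).const_mul k
    have := (h1.exp).fun_mul (hg' x)
    refine this.congr_deriv ?_
    simp only [hgp_def]
    ring
  have hGanti : AntitoneOn (fun y => Real.exp (k*y) * g y) (Ici R) := by
    apply antitoneOn_of_deriv_nonpos (convex_Ici R) (by fun_prop)
    · intro x _; exact ((hGder x).differentiableAt).differentiableWithinAt
    · intro x hx
      rw [interior_Ici] at hx
      rw [(hGder x).deriv]
      have h1 := hFle x (le_of_lt hx : R ≤ x)
      have h2 := (Real.exp_pos (k*x)).le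
      nlinarith
  have hright : ∀ x : ℝ, R ≤ x → g x ≤ (Real.exp (k*R) * g R) * Real.exp (-(k*x)) := by
    intro x hx
    have h1 := hGanti (self_mem_Ici) hx hx
    have hxe : Real.exp (k*x) * Real.exp (-(k*x)) = 1 := by
      rw [← Real.exp_add]; simp
    calc g x = Real.exp (k*x) * g x * Real.exp (-(k*x)) := by
          rw [mul_comm (Real.exp (k*x)) (g x), mul_assoc, hxe, mul_one]
      _ ≤ Real.exp (k*R) * g R * Real.exp (-(k*x)) :=
          mul_le_mul_of_nonneg_right h1 (Real.exp_nonneg _)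
  -- left-hand side decay
  have hF2der : ∀ x, HasDerivAt (fun y => Real.exp (k*y) * (gp y - k * g y))
      (Real.exp (k*x) * ((4*a*g x - 3*b*g x^2) - k^2 * g x)) x := by
    intro x
    have h1 : HasDerivAt (fun y : ℝ => k*y) k x := by
      simpa using (hasDerivAt_id x).const_mul k
    have hin : HasDerivAt (fun y => gp y - k * g y)
        ((4*a*g x - 3*b*g x^2) - k * (2 * Φ x * d x)) x :=
      (hg'' x).sub ((hg' x).const_mul k)
    have := (h1.exp).fun_mul hin
    refine this.congr_deriv ?_
    simp only [hgp_def]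
    ring
  set F2 : ℝ → ℝ := fun y => Real.exp (k*y) * (gp y - k * g y) with hF2_def
  have hF2cont : Continuous F2 := by rw [hF2_def]; unfold gp; fun_prop
  have hF2mono : MonotoneOn F2 (Iic (-R)) := by
    apply monotoneOn_of_deriv_nonneg (convex_Iic (-R)) hF2cont.continuousOn
    · intro x _; exact ((hF2der x).differentiableAt).differentiableWithinAt
    · intro x hx
      rw [interior_Iic, mem_Iio] at hx
      rw [(hF2der x).deriv]
      have hxR : R ≤ |x| := by
        rw [abs_of_neg (by linarith : x < 0)]; linarith
      have h1 := hkey x hxR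
      have h2 := (Real.exp_pos (k*x)).le
      nlinarith
  have hexp_bot : Tendsto (fun x : ℝ => Real.exp (k*x)) atBot (nhds 0) := by
    apply Real.tendsto_exp_atBot.comp
    exact Tendsto.const_mul_atBot hk0 tendsto_id
  have hF2bot : Tendsto F2 atBot (nhds 0) := by
    have h2 : Tendsto (fun x => gp x - k * g x) atBot (nhds 0) := by
      have := gpbot.sub (gbot.const_mul k); simpa using this
    have := hexp_bot.mul h2; simpa using this
  have hF2ge : ∀ x ∈ Iic (-R), 0 ≤ gp x - k * g x := by
    intro x hx
    have h1 : 0 ≤ F2 x := by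
      refine le_of_tendsto hF2bot ?_
      filter_upwards [eventually_le_atBot x] with y hy
      exact hF2mono (le_trans hy hx : y ∈ Iic (-R)) hx hy
    simp only [hF2_def] at h1
    have h2 := Real.exp_pos (k*x)
    nlinarith
  have hG2der : ∀ x, HasDerivAt (fun y => Real.exp (-(k*y)) * g y)
      (Real.exp (-(k*x)) * (gp x - k * g x)) x := by
    intro x
    have h1 : HasDerivAt (fun y : ℝ => -(k*y)) (-k) x := by
      simpa using ((hasDerivAt_id x).const_mul k).fun_neg
    have := (h1.exp).fun_mul (hg' x)
    refine this.congr_deriv ?_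
    simp only [hgp_def]
    ring
  have hG2mono : MonotoneOn (fun y => Real.exp (-(k*y)) * g y) (Iic (-R)) := by
    apply monotoneOn_of_deriv_nonneg (convex_Iic (-R)) (by fun_prop)
    · intro x _; exact ((hG2der x).differentiableAt).differentiableWithinAt
    · intro x hx
      rw [interior_Iic, mem_Iio] at hx
      rw [(hG2der x).deriv]
      have h1 := hF2ge x (le_of_lt hx)
      have h2 := (Real.exp_pos (-(k*x))).le
      nlinarith
  have hleft : ∀ x : ℝ, x ≤ -R → g x ≤ (Real.exp (k*R) * g (-R)) * Real.exp (-(k*(-x))) := by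
    intro x hx
    have h1 := hG2mono (hx : x ∈ Iic (-R)) (self_mem_Iic) hx
    have hxe : Real.exp (-(k*x)) * Real.exp (-(k*(-x))) = 1 := by
      rw [← Real.exp_add]; simp
    have h2 : Real.exp (-(k*(-R))) = Real.exp (k*R) := by ring_nf
    calc g x = Real.exp (-(k*x)) * g x * Real.exp (-(k*(-x))) := by
          rw [mul_comm (Real.exp (-(k*x))) (g x), mul_assoc, hxe, mul_one]
      _ ≤ Real.exp (-(k*(-R))) * g (-R) * Real.exp (-(k*(-x))) :=
          mul_le_mul_of_nonneg_right h1 (Real.exp_nonneg _)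
      _ = (Real.exp (k*R) * g (-R)) * Real.exp (-(k*(-x))) := by rw [h2]
  -- middle and assembly of the decay bound for g
  obtain ⟨C0, hC0⟩ := (isCompact_Icc (a := -R) (b := R)).exists_bound_of_continuousOn
    hgcont.continuousOn
  have hC0_0 : 0 ≤ C0 := le_trans (norm_nonneg (g R)) (hC0 R ⟨by linarith, le_rfl⟩)
  set C : ℝ := max (Real.exp (k*R) * g R) (max (Real.exp (k*R) * g (-R))
    (C0 * Real.exp (k*R))) with hC_def
  have hC_0 : 0 ≤ C :=
    le_trans (by positivity : (0:ℝ) ≤ C0 * Real.exp (k*R))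
      (le_max_of_le_right (le_max_right _ _))
  have hgC : ∀ x : ℝ, g x ≤ C * Real.exp (-(k*|x|)) := by
    intro x
    rcases le_total R |x| with h | h
    · rcases le_abs.mp h with h1 | h1
      · have h2 := hright x h1
        have hax : |x| = x := abs_of_pos (lt_of_lt_of_le hR0 h1)
        rw [hax]
        exact le_trans h2 (mul_le_mul_of_nonneg_right (le_max_left _ _) (Real.exp_nonneg _))
      · have h2 := hleft x (by linarith)
        have hax : |x| = -x := abs_of_neg (by linarith)
        rw [hax]
        exact le_trans h2 (mul_le_mul_of_nonneg_right
          (le_max_of_le_right (le_max_left _ _)) (Real.exp_nonneg _))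
    · have hx1 : x ∈ Icc (-R) R := by
        constructor
        · linarith [neg_abs_le x]
        · linarith [le_abs_self x]
      have h1 : g x ≤ C0 := le_trans (le_abs_self _) (hC0 x hx1)
      have h2 : Real.exp (-(k*R)) ≤ Real.exp (-(k*|x|)) :=
        Real.exp_le_exp.mpr (by nlinarith [abs_nonneg x])
      calc g x ≤ C0 := h1
        _ = C0 * Real.exp (k*R) * Real.exp (-(k*R)) := by
            rw [mul_assoc, ← Real.exp_add]; simp
        _ ≤ C0 * Real.exp (k*R) * Real.exp (-(k*|x|)) :=
            mul_le_mul_of_nonneg_left h2 (by positivity)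
        _ ≤ C * Real.exp (-(k*|x|)) :=
            mul_le_mul_of_nonneg_right
              (le_max_of_le_right (le_max_right _ _)) (Real.exp_nonneg _)
  -- final assembly
  refine ⟨(1 + Real.sqrt a) * Real.sqrt C, fun x => ?_⟩
  have key : Real.exp (ε * Real.sqrt a * |x|) * |Φ x| ≤ Real.sqrt C := by
    have h0 : 0 ≤ Real.exp (ε * Real.sqrt a * |x|) * |Φ x| := by positivity
    have h1 : (Real.exp (ε * Real.sqrt a * |x|) * |Φ x|)^2 ≤ (Real.sqrt C)^2 := by
      rw [Real.sq_sqrt hC_0, mul_pow, sq_abs]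
      have he2 : Real.exp (ε * Real.sqrt a * |x|)^2 = Real.exp (k * |x|) := by
        rw [sq, ← Real.exp_add]
        congr 1
        rw [hk_def]; ring
      rw [he2, show Φ x ^ 2 = g x from rfl]
      have h3 := mul_le_mul_of_nonneg_left (hgC x) (Real.exp_nonneg (k * |x|))
      calc Real.exp (k*|x|) * g x ≤ Real.exp (k*|x|) * (C * Real.exp (-(k*|x|))) := h3
        _ = C := by
            rw [← mul_assoc, mul_comm (Real.exp (k*|x|)) C, mul_assoc, ← Real.exp_add]
            simp
    have h2 := aux_abs_le_of_sq_le h1 (Real.sqrt_nonneg C)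
    rwa [abs_of_nonneg h0] at h2
  calc Real.exp (ε * Real.sqrt a * |x|) * (|Φ x| + |d x|)
      ≤ Real.exp (ε * Real.sqrt a * |x|) * ((1 + Real.sqrt a) * |Φ x|) := by
        have h1 := hdle x
        have h2 := abs_nonneg (Φ x)
        have h3 := (Real.exp_pos (ε * Real.sqrt a * |x|)).le
        nlinarith
    _ = (1 + Real.sqrt a) * (Real.exp (ε * Real.sqrt a * |x|) * |Φ x|) := by ring
    _ ≤ (1 + Real.sqrt a) * Real.sqrt C :=
        mul_le_mul_of_nonneg_left key (by positivity)

theorem stmt3 (α β ω c : ℝ) (hβ : β ≠ 0) (hc : |c| < 1)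
    (hC1 : 1 - c^2 - ω^2 > 0) (hC2 : α - β * (1 - c^2) > 0)
    (I : ℝ) (hI : I = (1 - c^2 - ω^2) / (1 - c^2)^2)
    (Φ : ℝ → ℝ) (hΦ : ContDiff ℝ 2 Φ)
    (hode : ∀ x : ℝ,
      deriv (deriv Φ) x - ((1 - c^2 - ω^2) / (1 - c^2)^2) * Φ x
        + ((α - β * (1 - c^2)) / (1 - c^2)^2) * (Φ x)^3 = 0)
    (hL2 : Integrable (fun x : ℝ => (Φ x)^2))
    (hL2' : Integrable (fun x : ℝ => (deriv Φ x)^2)) :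
    ∀ ε : ℝ, 0 < ε → ε < 1 →
      ∃ M : ℝ, ∀ x : ℝ,
        Real.exp (ε * Real.sqrt I * |x|) * (|Φ x| + |deriv Φ x|) ≤ M := by
  intro ε hε0 hε1
  have hc2 : c^2 < 1 := by
    have := sq_abs c
    nlinarith [abs_nonneg c]
  have hden : (0:ℝ) < (1 - c^2)^2 := by nlinarith
  set a : ℝ := (1 - c^2 - ω^2) / (1 - c^2)^2 with ha_def
  set b : ℝ := (α - β * (1 - c^2)) / (1 - c^2)^2 with hb_def
  have ha : 0 < a := div_pos hC1 hden
  have hb : 0 < b := div_pos hC2 hden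
  have hode' : ∀ x, deriv (deriv Φ) x = a * Φ x - b * Φ x ^ 3 := by
    intro x
    have := hode x
    rw [ha_def, hb_def]
    linarith
  obtain ⟨M, hM⟩ := decay_main a b ha hb Φ hΦ hode' hL2 hL2' ε hε0 hε1
  exact ⟨M, fun x => by rw [hI]; exact hM x⟩
end

section
/- Assume condition (C) and let x₀, γ₀ ∈ ℝ. Set θ = ωc/(1−c²), λ(x,t) = θ(x−ct) − ωt + γ₀, u(x,t) = e^{iλ(x,t)}·φ_{ω,c}(x − ct − x₀), ρ(x,t) = −∂_t u(x,t), v(x,t) = −(1−c²)^{−1}·φ_{ω,c}(x − ct − x₀)², and n(x,t) = −c·v(x,t). Then (u, ρ, v, n) satisfies all four equations of system (S) at every point (x,t) ∈ ℝ². -/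
open MeasureTheory Filter

noncomputable def sechF (A K ξ : ℝ) : ℝ := A * (Real.cosh (K * ξ))⁻¹
noncomputable def sechF' (A K ξ : ℝ) : ℝ :=
  -(A*K) * (Real.sinh (K * ξ) * ((Real.cosh (K * ξ))⁻¹)^2)
noncomputable def sechF'' (A K ξ : ℝ) : ℝ :=
  A*K^2 * ((Real.cosh (K * ξ))⁻¹ - 2*((Real.cosh (K * ξ))⁻¹)^3)

lemma cosh_ne (y : ℝ) : Real.cosh y ≠ 0 := (Real.cosh_pos y).ne'

lemma hasDerivAt_sechF (A K ξ : ℝ) : HasDerivAt (sechF A K) (sechF' A K ξ) ξ := by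
  have h1 : HasDerivAt (fun ξ : ℝ => K * ξ) K ξ := by
    simpa using (hasDerivAt_id ξ).const_mul K
  have h2 : HasDerivAt (fun ξ : ℝ => Real.cosh (K*ξ)) (Real.sinh (K*ξ) * K) ξ :=
    (Real.hasDerivAt_cosh (K*ξ)).comp ξ h1
  have h3 := (h2.inv (cosh_ne _)).const_mul A
  refine HasDerivAt.congr_deriv h3 (Eq.symm ?_)
  unfold sechF'
  field_simp

lemma hasDerivAt_sechF' (A K ξ : ℝ) : HasDerivAt (sechF' A K) (sechF'' A K ξ) ξ := by
  have h1 : HasDerivAt (fun ξ : ℝ => K * ξ) K ξ := by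
    simpa using (hasDerivAt_id ξ).const_mul K
  have hs : HasDerivAt (fun ξ : ℝ => Real.sinh (K*ξ)) (Real.cosh (K*ξ) * K) ξ :=
    (Real.hasDerivAt_sinh (K*ξ)).comp ξ h1
  have h2 : HasDerivAt (fun ξ : ℝ => Real.cosh (K*ξ)) (Real.sinh (K*ξ) * K) ξ :=
    (Real.hasDerivAt_cosh (K*ξ)).comp ξ h1
  have hinv := h2.inv (cosh_ne _)
  have hpow := hinv.pow 2
  have := (hs.mul hpow).const_mul (-(A*K))
  refine HasDerivAt.congr_deriv this (Eq.symm ?_)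
  unfold sechF''
  have hss : Real.sinh (K*ξ)^2 = Real.cosh (K*ξ)^2 - 1 := Real.sinh_sq (K*ξ)
  simp only [Pi.inv_apply, Pi.pow_apply]
  norm_num
  have hch := cosh_ne (K*ξ)
  field_simp
  linear_combination (-(2*A*K^2)) * hss

theorem stmt5 (α β ω c x₀ γ₀ : ℝ) (hβ : β ≠ 0) (hc : |c| < 1)
    (hC1 : 1 - c^2 - ω^2 > 0) (hC2 : α - β * (1 - c^2) > 0)
    (θ : ℝ) (hθ : θ = ω * c / (1 - c^2))
    (u ρ : ℝ → ℝ → ℂ) (v n : ℝ → ℝ → ℝ)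
    (hu : u = fun x t => Complex.exp (Complex.I * ((θ * (x - c * t) - ω * t + γ₀ : ℝ) : ℂ)) *
      ((solitonProfile α β ω c (x - c * t - x₀) : ℝ) : ℂ))
    (hρ : ρ = fun x t => -deriv (fun s => u x s) t)
    (hv : v = fun x t => -(1 - c^2)⁻¹ * (solitonProfile α β ω c (x - c * t - x₀))^2)
    (hn : n = fun x t => -c * v x t) :
    ∀ x t : ℝ,
      (deriv (fun s => u x s) t = -ρ x t) ∧
      (deriv (fun s => ρ x s) t =
        -(deriv (fun y => deriv (fun z => u z t) y) x) + u x t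
          + (α : ℂ) * ((v x t : ℝ) : ℂ) * u x t
          + (β : ℂ) * ((‖u x t‖^2 : ℝ) : ℂ) * u x t) ∧
      (deriv (fun s => v x s) t = deriv (fun y => n y t) x) ∧
      (deriv (fun s => n x s) t - deriv (fun y => v y t) x
        = deriv (fun y => ‖u y t‖^2) x) := by
  intro x t
  have habs := abs_lt.mp hc
  have hc2 : (0:ℝ) < 1 - c^2 := by nlinarith
  have hc2' : (1 - c^2 : ℝ) ≠ 0 := ne_of_gt hc2
  set A := Real.sqrt (2 * (1 - c^2 - ω^2) / (α - β * (1 - c^2))) with hAdef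
  set K := Real.sqrt (1 - c^2 - ω^2) / (1 - c^2) with hKdef
  have hA2 : A^2 = 2 * (1 - c^2 - ω^2) / (α - β * (1 - c^2)) := by
    rw [hAdef]; exact Real.sq_sqrt (le_of_lt (div_pos (by nlinarith) hC2))
  have hK2 : K^2 = (1 - c^2 - ω^2) / (1 - c^2)^2 := by
    rw [hKdef, div_pow, Real.sq_sqrt hC1.le]
  have hφ : ∀ ξ : ℝ, solitonProfile α β ω c ξ = sechF A K ξ := by
    intro ξ
    have harg : Real.sqrt (1 - c^2 - ω^2) * ξ / (1 - c^2) = K * ξ := by rw [hKdef]; ring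
    rw [solitonProfile, sechF, harg, one_div, hAdef]
  have hODE : ∀ ξ : ℝ, sechF'' A K ξ =
      K^2 * sechF A K ξ - ((α - β*(1-c^2))/(1-c^2)^2) * (sechF A K ξ)^3 := by
    intro ξ
    have key : 2*K^2 = ((α - β*(1-c^2))/(1-c^2)^2) * A^2 := by
      rw [hK2, hA2, div_mul_div_comm, mul_comm (α - β*(1-c^2)) (2 * (1 - c^2 - ω^2)),
        mul_div_mul_right _ _ (ne_of_gt hC2)]; ring
    unfold sechF sechF''
    linear_combination (-(A * ((Real.cosh (K*ξ))⁻¹)^3)) * key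
  set μ := θ * c + ω with hμdef
  have hθc : θ * (1 - c^2) = ω * c := by rw [hθ]; field_simp
  have himag : μ * c = θ := by rw [hμdef]; linear_combination (-1 : ℝ) * hθc
  have hreal : ∀ ξ0 : ℝ, μ^2 * sechF A K ξ0 - c^2 * sechF'' A K ξ0
      = θ^2 * sechF A K ξ0 - sechF'' A K ξ0 + sechF A K ξ0
        + α * (-(1-c^2)⁻¹ * (sechF A K ξ0)^2) * sechF A K ξ0 + β * (sechF A K ξ0)^3 := by
    intro ξ0
    rw [hODE ξ0, hμdef, hθ, hK2]
    field_simp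
    ring
  -- time-direction inner derivatives
  have hxit : ∀ y τ : ℝ, HasDerivAt (fun s : ℝ => y - c*s - x₀) (-c) τ := by
    intro y τ
    simpa using (((hasDerivAt_id τ).const_mul c).const_sub y).sub_const x₀
  have hP : ∀ y τ : ℝ, HasDerivAt (fun s : ℝ => sechF A K (y - c*s - x₀))
      (-c * sechF' A K (y - c*τ - x₀)) τ := by
    intro y τ
    have h := (hasDerivAt_sechF A K (y - c*τ - x₀)).comp τ (hxit y τ)
    refine HasDerivAt.congr_deriv h (Eq.symm ?_)
    · ring
  have hP' : ∀ y τ : ℝ, HasDerivAt (fun s : ℝ => sechF' A K (y - c*s - x₀))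
      (-c * sechF'' A K (y - c*τ - x₀)) τ := by
    intro y τ
    have h := (hasDerivAt_sechF' A K (y - c*τ - x₀)).comp τ (hxit y τ)
    refine HasDerivAt.congr_deriv h (Eq.symm ?_)
    · ring
  have hxix : ∀ y : ℝ, HasDerivAt (fun z : ℝ => z - c*t - x₀) 1 y := by
    intro y
    simpa using ((hasDerivAt_id y).sub_const (c*t)).sub_const x₀
  have hPx : ∀ y : ℝ, HasDerivAt (fun z : ℝ => sechF A K (z - c*t - x₀))
      (sechF' A K (y - c*t - x₀)) y := by
    intro y
    have h := (hasDerivAt_sechF A K (y - c*t - x₀)).comp y (hxix y)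
    refine HasDerivAt.congr_deriv h (Eq.symm ?_)
    · ring
  have hP'x : ∀ y : ℝ, HasDerivAt (fun z : ℝ => sechF' A K (z - c*t - x₀))
      (sechF'' A K (y - c*t - x₀)) y := by
    intro y
    have h := (hasDerivAt_sechF' A K (y - c*t - x₀)).comp y (hxix y)
    refine HasDerivAt.congr_deriv h (Eq.symm ?_)
    · ring
  -- phase derivatives
  have hLt : ∀ y τ : ℝ, HasDerivAt (fun s : ℝ => θ*(y - c*s) - ω*s + γ₀) (-μ) τ := by
    intro y τ
    have h1 : HasDerivAt (fun s : ℝ => θ*(y - c*s)) (θ * -(c*1)) τ :=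
      (((hasDerivAt_id τ).const_mul c).const_sub y).const_mul θ
    have h2 := (h1.sub ((hasDerivAt_id τ).const_mul ω)).add_const γ₀
    refine HasDerivAt.congr_deriv h2 (Eq.symm ?_)
    rw [hμdef]; simp; ring
  have hLx : ∀ y : ℝ, HasDerivAt (fun z : ℝ => θ*(z - c*t) - ω*t + γ₀) θ y := by
    intro y
    have h1 : HasDerivAt (fun z : ℝ => θ*(z - c*t)) (θ * 1) y :=
      ((hasDerivAt_id y).sub_const (c*t)).const_mul θ
    have h2 := (h1.sub_const (ω*t)).add_const γ₀
    simpa using h2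
  have hEt : ∀ y τ : ℝ, HasDerivAt
      (fun s : ℝ => Complex.exp (Complex.I * ((θ*(y - c*s) - ω*s + γ₀ : ℝ) : ℂ)))
      (Complex.exp (Complex.I * ((θ*(y - c*τ) - ω*τ + γ₀ : ℝ) : ℂ)) * (Complex.I * ((-μ : ℝ) : ℂ))) τ := by
    intro y τ
    exact (((hLt y τ).ofReal_comp).const_mul Complex.I).cexp
  have hEx : ∀ y : ℝ, HasDerivAt
      (fun z : ℝ => Complex.exp (Complex.I * ((θ*(z - c*t) - ω*t + γ₀ : ℝ) : ℂ)))
      (Complex.exp (Complex.I * ((θ*(y - c*t) - ω*t + γ₀ : ℝ) : ℂ)) * (Complex.I * ((θ : ℝ) : ℂ))) y := by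
    intro y
    exact (((hLx y).ofReal_comp).const_mul Complex.I).cexp
  -- u time derivative
  have hut : ∀ y τ : ℝ, HasDerivAt (fun s : ℝ => u y s)
      (Complex.exp (Complex.I * ((θ*(y - c*τ) - ω*τ + γ₀ : ℝ) : ℂ)) *
        (Complex.I * ((-μ : ℝ) : ℂ) * ((sechF A K (y - c*τ - x₀) : ℝ) : ℂ)
          + ((-c : ℝ) : ℂ) * ((sechF' A K (y - c*τ - x₀) : ℝ) : ℂ))) τ := by
    intro y τ
    rw [hu]
    simp only [hφ]
    have h := (hEt y τ).mul ((hP y τ).ofReal_comp)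
    refine HasDerivAt.congr_deriv h (Eq.symm ?_)
    push_cast
    ring
  have hrhofun : ∀ y : ℝ, (fun s : ℝ => ρ y s) = (fun s : ℝ =>
      -(Complex.exp (Complex.I * ((θ*(y - c*s) - ω*s + γ₀ : ℝ) : ℂ)) *
        (Complex.I * ((-μ : ℝ) : ℂ) * ((sechF A K (y - c*s - x₀) : ℝ) : ℂ)
          + ((-c : ℝ) : ℂ) * ((sechF' A K (y - c*s - x₀) : ℝ) : ℂ)))) := by
    intro y
    funext s
    rw [hρ]
    simp only
    rw [(hut y s).deriv]
  -- u space derivative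
  have hux : ∀ y : ℝ, HasDerivAt (fun z : ℝ => u z t)
      (Complex.exp (Complex.I * ((θ*(y - c*t) - ω*t + γ₀ : ℝ) : ℂ)) *
        (Complex.I * ((θ : ℝ) : ℂ) * ((sechF A K (y - c*t - x₀) : ℝ) : ℂ)
          + ((sechF' A K (y - c*t - x₀) : ℝ) : ℂ))) y := by
    intro y
    rw [hu]
    simp only [hφ]
    have h := (hEx y).mul ((hPx y).ofReal_comp)
    refine HasDerivAt.congr_deriv h (Eq.symm ?_)
    push_cast
    ring
  have huxfun : (fun y : ℝ => deriv (fun z : ℝ => u z t) y) = (fun y : ℝ =>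
      Complex.exp (Complex.I * ((θ*(y - c*t) - ω*t + γ₀ : ℝ) : ℂ)) *
        (Complex.I * ((θ : ℝ) : ℂ) * ((sechF A K (y - c*t - x₀) : ℝ) : ℂ)
          + ((sechF' A K (y - c*t - x₀) : ℝ) : ℂ))) := by
    funext y
    rw [(hux y).deriv]
  have hnorm : ∀ y τ : ℝ, ‖u y τ‖^2 = (sechF A K (y - c*τ - x₀))^2 := by
    intro y τ
    rw [hu]
    simp only [hφ]
    rw [norm_mul]
    have h1 : ‖Complex.exp (Complex.I * ((θ*(y - c*τ) - ω*τ + γ₀ : ℝ) : ℂ))‖ = 1 := by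
      rw [Complex.norm_exp]
      simp
    rw [h1, one_mul, Complex.norm_real, Real.norm_eq_abs, sq_abs]
  refine ⟨?_, ?_, ?_, ?_⟩
  · -- equation 1
    simp only [hρ, neg_neg]
  · -- equation 2
    have hgt : HasDerivAt (fun s : ℝ => Complex.I * ((-μ : ℝ) : ℂ) *
          ((sechF A K (x - c*s - x₀) : ℝ) : ℂ) + ((-c : ℝ) : ℂ) * ((sechF' A K (x - c*s - x₀) : ℝ) : ℂ))
        (Complex.I * ((-μ : ℝ) : ℂ) * ((-c * sechF' A K (x - c*t - x₀) : ℝ) : ℂ)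
          + ((-c : ℝ) : ℂ) * ((-c * sechF'' A K (x - c*t - x₀) : ℝ) : ℂ)) t :=
      (((hP x t).ofReal_comp).const_mul (Complex.I * ((-μ : ℝ) : ℂ))).add
        (((hP' x t).ofReal_comp).const_mul ((-c : ℝ) : ℂ))
    have hDt := ((hEt x t).mul hgt).neg
    simp only [Pi.mul_def, Pi.neg_def] at hDt
    have hgx : HasDerivAt (fun z : ℝ => Complex.I * ((θ : ℝ) : ℂ) *
          ((sechF A K (z - c*t - x₀) : ℝ) : ℂ) + ((sechF' A K (z - c*t - x₀) : ℝ) : ℂ))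
        (Complex.I * ((θ : ℝ) : ℂ) * ((sechF' A K (x - c*t - x₀) : ℝ) : ℂ)
          + ((sechF'' A K (x - c*t - x₀) : ℝ) : ℂ)) x :=
      (((hPx x).ofReal_comp).const_mul (Complex.I * ((θ : ℝ) : ℂ))).add ((hP'x x).ofReal_comp)
    have hDx := (hEx x).mul hgx
    simp only [Pi.mul_def] at hDx
    rw [hrhofun x, hDt.deriv, huxfun, hDx.deriv, hnorm x t, hu, hv]
    simp only [hφ]
    have himagC : (μ : ℂ) * (c : ℂ) = (θ : ℂ) := by exact_mod_cast himag
    have hrealC : (μ : ℂ)^2 * ((sechF A K (x - c*t - x₀) : ℝ) : ℂ)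
        - (c : ℂ)^2 * ((sechF'' A K (x - c*t - x₀) : ℝ) : ℂ)
        = (θ : ℂ)^2 * ((sechF A K (x - c*t - x₀) : ℝ) : ℂ)
          - ((sechF'' A K (x - c*t - x₀) : ℝ) : ℂ) + ((sechF A K (x - c*t - x₀) : ℝ) : ℂ)
          + (α : ℂ) * (-((1 : ℂ) - (c : ℂ)^2)⁻¹ * ((sechF A K (x - c*t - x₀) : ℝ) : ℂ)^2)
            * ((sechF A K (x - c*t - x₀) : ℝ) : ℂ)
          + (β : ℂ) * ((sechF A K (x - c*t - x₀) : ℝ) : ℂ)^3 := by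
      exact_mod_cast hreal (x - c*t - x₀)
    set E := Complex.exp (Complex.I * ((θ*(x - c*t) - ω*t + γ₀ : ℝ) : ℂ)) with hEdef
    push_cast
    linear_combination E * hrealC
      + (-2*Complex.I*E*((sechF' A K (x - c*t - x₀) : ℝ) : ℂ)) * himagC
      + (-(E*((μ : ℂ)^2 - (θ : ℂ)^2)*((sechF A K (x - c*t - x₀) : ℝ) : ℂ))) * Complex.I_sq
  · -- equation 3
    have hvt : HasDerivAt (fun s : ℝ => v x s)
        (-(1-c^2)⁻¹ * (2 * sechF A K (x - c*t - x₀) * (-c * sechF' A K (x - c*t - x₀)))) t := by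
      have h := (((hP x t).pow 2).const_mul (-(1-c^2)⁻¹))
      have hfun : (fun s : ℝ => v x s)
          = fun s : ℝ => -(1-c^2)⁻¹ * (sechF A K (x - c*s - x₀))^2 := by
        funext s; rw [hv]; simp only [hφ]
      rw [hfun]
      refine HasDerivAt.congr_deriv h (Eq.symm ?_)
      push_cast
      ring
    have hnx : HasDerivAt (fun y : ℝ => n y t)
        (-c * (-(1-c^2)⁻¹ * (2 * sechF A K (x - c*t - x₀) * sechF' A K (x - c*t - x₀)))) x := by
      have h := (((hPx x).pow 2).const_mul (-(1-c^2)⁻¹)).const_mul (-c)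
      have hfun : (fun y : ℝ => n y t)
          = fun y : ℝ => -c * (-(1-c^2)⁻¹ * (sechF A K (y - c*t - x₀))^2) := by
        funext y; rw [hn, hv]; simp only [hφ]
      rw [hfun]
      refine HasDerivAt.congr_deriv h (Eq.symm ?_)
      push_cast
      ring
    rw [hvt.deriv, hnx.deriv]
    ring
  · -- equation 4
    have hnt : HasDerivAt (fun s : ℝ => n x s)
        (-c * (-(1-c^2)⁻¹ * (2 * sechF A K (x - c*t - x₀) * (-c * sechF' A K (x - c*t - x₀))))) t := by
      have h := ((((hP x t).pow 2).const_mul (-(1-c^2)⁻¹)).const_mul (-c))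
      have hfun : (fun s : ℝ => n x s)
          = fun s : ℝ => -c * (-(1-c^2)⁻¹ * (sechF A K (x - c*s - x₀))^2) := by
        funext s; rw [hn, hv]; simp only [hφ]
      rw [hfun]
      refine HasDerivAt.congr_deriv h (Eq.symm ?_)
      push_cast
      ring
    have hvx : HasDerivAt (fun y : ℝ => v y t)
        (-(1-c^2)⁻¹ * (2 * sechF A K (x - c*t - x₀) * sechF' A K (x - c*t - x₀))) x := by
      have h := (((hPx x).pow 2).const_mul (-(1-c^2)⁻¹))
      have hfun : (fun y : ℝ => v y t)
          = fun y : ℝ => -(1-c^2)⁻¹ * (sechF A K (y - c*t - x₀))^2 := by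
        funext y; rw [hv]; simp only [hφ]
      rw [hfun]
      refine HasDerivAt.congr_deriv h (Eq.symm ?_)
      push_cast
      ring
    have hux2 : HasDerivAt (fun y : ℝ => ‖u y t‖^2)
        (2 * sechF A K (x - c*t - x₀) * sechF' A K (x - c*t - x₀)) x := by
      have h := (hPx x).pow 2
      have hfun : (fun y : ℝ => ‖u y t‖^2)
          = fun y : ℝ => (sechF A K (y - c*t - x₀))^2 := by
        funext y; exact hnorm y t
      rw [hfun]
      refine HasDerivAt.congr_deriv h (Eq.symm ?_)
      push_cast
      ring
    rw [hnt.deriv, hvx.deriv, hux2.deriv]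
    field_simp
    ring
end

section
/- Let ω, c be real with |c| < 1 and θ = ωc/(1−c²). Suppose φ̃, ρ̃ : ℝ → ℂ and ψ, ϕ : ℝ → ℝ are twice continuously differentiable, tend to 0 at ±∞, and satisfy for all x: ρ̃ = iωφ̃ + cφ̃'; −iωρ̃ − cρ̃' = −φ̃'' + φ̃ + α·φ̃·ψ + β|φ̃|²φ̃; −cψ' = ϕ'; −cϕ' = ψ' + (|φ̃|²)'. Then ψ = −|φ̃|²/(1−c²) and ϕ = c·|φ̃|²/(1−c²) on ℝ; moreover, if φ̃(x) = e^{iθx}·φ(x) with φ : ℝ → ℝ real-valued, then φ satisfies equation (E) at every point. -/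
open MeasureTheory Filter

private lemma diff_of_cd2 {E : Type*} [NormedAddCommGroup E] [NormedSpace ℝ E]
    {f : ℝ → E} (h : ContDiff ℝ 2 f) : Differentiable ℝ f ∧ Differentiable ℝ (deriv f) := by
  have h2 : ContDiff ℝ (1+1 : ℕ) f := h
  rw [show ((1+1:ℕ) : WithTop ℕ∞) = (1:WithTop ℕ∞)+1 by norm_cast,
    contDiff_succ_iff_deriv] at h2
  exact ⟨h2.1, h2.2.2.differentiable one_ne_zero⟩

theorem stmt6 (α β ω c : ℝ) (hβ : β ≠ 0) (hc : |c| < 1)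
    (θ : ℝ) (hθ : θ = ω * c / (1 - c^2))
    (φt ρt : ℝ → ℂ) (ψ ϕ : ℝ → ℝ)
    (hφt : ContDiff ℝ 2 φt) (hρt : ContDiff ℝ 2 ρt)
    (hψ : ContDiff ℝ 2 ψ) (hϕ : ContDiff ℝ 2 ϕ)
    (hφt0 : Tendsto φt atTop (nhds 0)) (hφt0' : Tendsto φt atBot (nhds 0))
    (hρt0 : Tendsto ρt atTop (nhds 0)) (hρt0' : Tendsto ρt atBot (nhds 0))
    (hψ0 : Tendsto ψ atTop (nhds 0)) (hψ0' : Tendsto ψ atBot (nhds 0))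
    (hϕ0 : Tendsto ϕ atTop (nhds 0)) (hϕ0' : Tendsto ϕ atBot (nhds 0))
    (heq1 : ∀ x : ℝ, ρt x = Complex.I * (ω : ℂ) * φt x + (c : ℂ) * deriv φt x)
    (heq2 : ∀ x : ℝ,
      -(Complex.I * (ω : ℂ) * ρt x) - (c : ℂ) * deriv ρt x =
        -(deriv (deriv φt) x) + φt x + (α : ℂ) * φt x * ((ψ x : ℝ) : ℂ)
          + (β : ℂ) * ((‖φt x‖^2 : ℝ) : ℂ) * φt x)
    (heq3 : ∀ x : ℝ, -(c * deriv ψ x) = deriv ϕ x)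
    (heq4 : ∀ x : ℝ, -(c * deriv ϕ x) = deriv ψ x + deriv (fun y => ‖φt y‖^2) x) :
    (∀ x : ℝ, ψ x = -‖φt x‖^2 / (1 - c^2)) ∧
    (∀ x : ℝ, ϕ x = c * ‖φt x‖^2 / (1 - c^2)) ∧
    (∀ φ : ℝ → ℝ, (∀ x : ℝ, φt x = Complex.exp (Complex.I * ((θ * x : ℝ) : ℂ)) * ((φ x : ℝ) : ℂ)) →
      ∀ ξ : ℝ,
        deriv (deriv φ) ξ - ((1 - c^2 - ω^2) / (1 - c^2)^2) * φ ξ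
          + ((α - β * (1 - c^2)) / (1 - c^2)^2) * (φ ξ)^3 = 0) := by
  have hc2 : c^2 < 1 := by
    have := sq_abs c
    nlinarith [abs_nonneg c]
  have h1c : (1:ℝ) - c^2 ≠ 0 := by nlinarith
  set n : ℝ → ℝ := fun y => ‖φt y‖^2 with hn_def
  -- smoothness of n
  have hφtd := diff_of_cd2 hφt
  have hψd := diff_of_cd2 hψ
  have hϕd := diff_of_cd2 hϕ
  have hn_eq : n = fun y => (φt y).re^2 + (φt y).im^2 := by
    funext y
    rw [hn_def]
    simp only [Complex.sq_norm, Complex.normSq_apply]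
    ring
  have hnC : ContDiff ℝ 2 n := by
    rw [hn_eq]
    exact ((Complex.reCLM.contDiff.comp hφt).pow 2).add
      ((Complex.imCLM.contDiff.comp hφt).pow 2)
  have hnd := diff_of_cd2 hnC
  -- n tends to 0
  have hn0 : Tendsto n atTop (nhds 0) := by
    have : Tendsto (fun y => ‖φt y‖) atTop (nhds ‖(0:ℂ)‖) := hφt0.norm
    simpa [hn_def] using this.pow 2
  -- key derivative relation
  have hkey : ∀ x, (1 - c^2) * deriv ψ x + deriv n x = 0 := by
    intro x
    have h3 := heq3 x
    have h4 := heq4 x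
    rw [← h3] at h4
    have : deriv (fun y => ‖φt y‖^2) x = deriv n x := rfl
    rw [this] at h4
    nlinarith [h4]
  -- Part 1
  have part1 : ∀ x : ℝ, ψ x = -‖φt x‖^2 / (1 - c^2) := by
    have hg : ∀ x, (1 - c^2) * ψ x + n x = 0 := by
      set g : ℝ → ℝ := fun x => (1 - c^2) * ψ x + n x with hg_def
      have hgdiff : Differentiable ℝ g := (hψd.1.const_mul _).add hnd.1
      have hgd : ∀ x, deriv g x = 0 := by
        intro x
        have : HasDerivAt g ((1 - c^2) * deriv ψ x + deriv n x) x :=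
          ((hψd.1 x).hasDerivAt.const_mul _).add (hnd.1 x).hasDerivAt
        rw [this.deriv, hkey x]
      have hconst := is_const_of_deriv_eq_zero hgdiff hgd
      have hg0 : Tendsto g atTop (nhds 0) := by
        have := (hψ0.const_mul (1 - c^2)).add hn0
        simpa [hg_def] using this
      intro x
      have : Tendsto g atTop (nhds (g x)) := by
        have : g = fun _ => g x := funext fun y => hconst y x
        rw [this]; exact tendsto_const_nhds
      exact tendsto_nhds_unique this hg0
    intro x
    have h := hg x
    simp only [hn_def] at h
    field_simp
    linarith
  refine ⟨part1, ?_, ?_⟩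
  -- Part 2
  · have hg : ∀ x, (1 - c^2) * ϕ x - c * n x = 0 := by
      set g : ℝ → ℝ := fun x => (1 - c^2) * ϕ x - c * n x with hg_def
      have hgdiff : Differentiable ℝ g := (hϕd.1.const_mul _).sub (hnd.1.const_mul _)
      have hgd : ∀ x, deriv g x = 0 := by
        intro x
        have : HasDerivAt g ((1 - c^2) * deriv ϕ x - c * deriv n x) x :=
          ((hϕd.1 x).hasDerivAt.const_mul _).sub ((hnd.1 x).hasDerivAt.const_mul _)
        rw [this.deriv]
        have h3 := heq3 x
        have hk := hkey x
        linear_combination (-(1 - c^2)) * h3 - c * hk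
      have hconst := is_const_of_deriv_eq_zero hgdiff hgd
      have hg0 : Tendsto g atTop (nhds 0) := by
        have := (hϕ0.const_mul (1 - c^2)).sub (hn0.const_mul c)
        simpa [hg_def] using this
      intro x
      have : Tendsto g atTop (nhds (g x)) := by
        have : g = fun _ => g x := funext fun y => hconst y x
        rw [this]; exact tendsto_const_nhds
      exact tendsto_nhds_unique this hg0
    intro x
    have h := hg x
    simp only [hn_def] at h
    field_simp
    linarith
  -- Part 3
  · intro φ hφeq ξ
    set E : ℝ → ℂ := fun x => Complex.exp (Complex.I * ((θ * x : ℝ) : ℂ)) with hE_def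
    have hE0 : ∀ x, E x ≠ 0 := fun x => Complex.exp_ne_zero _
    have hEd : ∀ x : ℝ, HasDerivAt E (Complex.I * θ * E x) x := by
      intro x
      have h1 : HasDerivAt (fun x : ℝ => Complex.I * ((θ * x : ℝ) : ℂ))
          (Complex.I * θ) x := by
        have h0 : HasDerivAt (fun x : ℝ => θ * x) θ x := by
          simpa using (hasDerivAt_id x).const_mul θ
        have := (h0.ofReal_comp).const_mul Complex.I
        simpa using this
      have := h1.cexp
      rw [hE_def]
      convert this using 1
      ring
    -- smoothness of φ
    have hΦC : ContDiff ℝ 2 (fun x : ℝ => ((φ x : ℝ) : ℂ)) := by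
      have hfe : (fun x : ℝ => ((φ x : ℝ) : ℂ))
          = fun x => Complex.exp (-(Complex.I * ((θ * x : ℝ) : ℂ))) * φt x := by
        funext x
        rw [hφeq x, ← mul_assoc, ← Complex.exp_add, neg_add_cancel,
          Complex.exp_zero, one_mul]
      rw [hfe]
      refine ContDiff.mul ?_ hφt
      refine Complex.contDiff_exp.comp ?_
      refine ContDiff.neg ?_
      exact contDiff_const.mul (Complex.ofRealCLM.contDiff.comp
        (contDiff_const.mul contDiff_id))
    have hφC : ContDiff ℝ 2 φ := by
      have hfe : φ = fun x => ((fun x : ℝ => ((φ x : ℝ) : ℂ)) x).re := by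
        funext x; simp
      rw [hfe]
      exact Complex.reCLM.contDiff.comp hΦC
    have hφd := diff_of_cd2 hφC
    set D : ℝ → ℝ := deriv φ with hD_def
    set D2 : ℝ → ℝ := deriv (deriv φ) with hD2_def
    have hΦd : ∀ x : ℝ, HasDerivAt (fun x : ℝ => ((φ x : ℝ) : ℂ)) ((D x : ℝ) : ℂ) x :=
      fun x => ((hφd.1 x).hasDerivAt).ofReal_comp
    have hDd : ∀ x : ℝ, HasDerivAt (fun x : ℝ => ((D x : ℝ) : ℂ)) ((D2 x : ℝ) : ℂ) x :=
      fun x => ((hφd.2 x).hasDerivAt).ofReal_comp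
    have hφt_fun : φt = fun x => E x * ((φ x : ℝ) : ℂ) := funext hφeq
    have hφt1 : ∀ x : ℝ, HasDerivAt φt
        (E x * (Complex.I * θ * ((φ x : ℝ) : ℂ) + ((D x : ℝ) : ℂ))) x := by
      intro x
      have h : HasDerivAt (fun x => E x * ((φ x : ℝ) : ℂ)) _ x := (hEd x).mul (hΦd x)
      rw [← hφt_fun] at h
      convert h using 1
      ring
    have hφt1' : deriv φt = fun x => E x * (Complex.I * θ * ((φ x : ℝ) : ℂ) + ((D x : ℝ) : ℂ)) :=
      funext fun x => (hφt1 x).deriv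
    have hφt2 : ∀ x : ℝ, HasDerivAt (deriv φt)
        (E x * (Complex.I * θ * (Complex.I * θ * ((φ x : ℝ) : ℂ) + ((D x : ℝ) : ℂ))
          + (Complex.I * θ * ((D x : ℝ) : ℂ) + ((D2 x : ℝ) : ℂ)))) x := by
      intro x
      have h : HasDerivAt (fun x => E x * (Complex.I * θ * ((φ x : ℝ) : ℂ) + ((D x : ℝ) : ℂ)))
          (Complex.I * θ * E x * (Complex.I * θ * ((φ x : ℝ) : ℂ) + ((D x : ℝ) : ℂ))
            + E x * (Complex.I * θ * ((D x : ℝ) : ℂ) + ((D2 x : ℝ) : ℂ))) x :=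
        (hEd x).mul (((hΦd x).const_mul (Complex.I * θ)).add (hDd x))
      rw [← hφt1'] at h
      convert h using 1
      ring
    have hρd : ∀ x : ℝ, HasDerivAt ρt
        (Complex.I * ω * (E x * (Complex.I * θ * ((φ x : ℝ) : ℂ) + ((D x : ℝ) : ℂ)))
          + c * (E x * (Complex.I * θ * (Complex.I * θ * ((φ x : ℝ) : ℂ) + ((D x : ℝ) : ℂ))
            + (Complex.I * θ * ((D x : ℝ) : ℂ) + ((D2 x : ℝ) : ℂ))))) x := by
      intro x
      have hρ_fun : ρt = fun x => Complex.I * ω * φt x + c * deriv φt x := funext heq1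
      have h : HasDerivAt (fun x => Complex.I * ω * φt x + c * deriv φt x) _ x :=
        ((hφt1 x).const_mul (Complex.I * (ω : ℂ))).add ((hφt2 x).const_mul (c : ℂ))
      rw [← hρ_fun] at h
      exact h
    -- norm identity
    have hnφ : ∀ x : ℝ, ‖φt x‖^2 = (φ x)^2 := by
      intro x
      rw [hφeq x, norm_mul]
      have h1 : ‖Complex.exp (Complex.I * ((θ * x : ℝ) : ℂ))‖ = 1 := by
        simpa [mul_comm] using Complex.norm_exp_ofReal_mul_I (θ * x)
      rw [h1, one_mul, Complex.norm_real]
      exact sq_abs _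
    have hψξ : ψ ξ = -((φ ξ)^2) / (1 - c^2) := by
      rw [part1 ξ, hnφ ξ]
    -- rewrite heq2
    have h2 := heq2 ξ
    rw [heq1 ξ, (hρd ξ).deriv, (hφt2 ξ).deriv, (hφt1 ξ).deriv, hnφ ξ, hφeq ξ] at h2
    -- cancel E ξ
    have hθc : θ * (1 - c^2) = ω * c := by
      rw [hθ]; field_simp
    have hXY :
        -(Complex.I * ω * (Complex.I * ω * ((φ ξ : ℝ) : ℂ)
            + c * (Complex.I * θ * ((φ ξ : ℝ) : ℂ) + ((D ξ : ℝ) : ℂ))))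
          - c * (Complex.I * ω * (Complex.I * θ * ((φ ξ : ℝ) : ℂ) + ((D ξ : ℝ) : ℂ))
            + c * (Complex.I * θ * (Complex.I * θ * ((φ ξ : ℝ) : ℂ) + ((D ξ : ℝ) : ℂ))
              + (Complex.I * θ * ((D ξ : ℝ) : ℂ) + ((D2 ξ : ℝ) : ℂ))))
        = -(Complex.I * θ * (Complex.I * θ * ((φ ξ : ℝ) : ℂ) + ((D ξ : ℝ) : ℂ))
            + (Complex.I * θ * ((D ξ : ℝ) : ℂ) + ((D2 ξ : ℝ) : ℂ)))
          + ((φ ξ : ℝ) : ℂ) + (α : ℂ) * ((φ ξ : ℝ) : ℂ) * ((ψ ξ : ℝ) : ℂ)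
          + (β : ℂ) * (((φ ξ)^2 : ℝ) : ℂ) * ((φ ξ : ℝ) : ℂ) := by
      apply mul_left_cancel₀ (hE0 ξ)
      linear_combination h2
    have hre := congrArg Complex.re hXY
    simp only [Complex.add_re, Complex.add_im, Complex.mul_re, Complex.mul_im,
      Complex.neg_re, Complex.neg_im, Complex.sub_re, Complex.sub_im,
      Complex.I_re, Complex.I_im, Complex.ofReal_re, Complex.ofReal_im] at hre
    ring_nf at hre
    rw [hψξ, hθ] at hre
    field_simp at hre ⊢
    apply mul_left_cancel₀ (pow_ne_zero 5 h1c)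
    linear_combination (1 - c^2)^4 * hre
end

section
/- Assume condition (C). Then there exist λ > 0 and a smooth function Ψ : ℝ → ℝ, not identically zero, with ∫_ℝ Ψ(x)² dx < ∞, such that L¹Ψ = −λ²·Ψ at every point of ℝ. -/
open MeasureTheory Filter

open Set in
lemma integrable_exp_neg_mul_abs' {b : ℝ} (hb : 0 < b) :
    Integrable (fun x : ℝ => Real.exp (-(b * |x|))) := by
  have hIoi : IntegrableOn (fun x : ℝ => Real.exp (-(b * |x|))) (Ioi 0) := by
    refine (exp_neg_integrableOn_Ioi 0 hb).congr_fun (fun x hx => ?_) measurableSet_Ioi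
    rw [abs_of_pos (by exact hx)]; ring_nf
  have hIic : IntegrableOn (fun x : ℝ => Real.exp (-(b * |x|))) (Iic 0) := by
    rw [← Measure.map_neg_eq_self (volume : Measure ℝ)]
    have m : MeasurableEmbedding fun x : ℝ => -x := (Homeomorph.neg ℝ).measurableEmbedding
    rw [m.integrableOn_map_iff]
    simp_rw [Function.comp_def, abs_neg, Set.neg_preimage, Set.neg_Iic, neg_zero]
    exact (integrableOn_Ici_iff_integrableOn_Ioi).mpr hIoi
  have h := hIic.union hIoi
  rwa [Iic_union_Ioi, integrableOn_univ] at h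

lemma sq_inv_cosh_integrable {k : ℝ} (hk : 0 < k) :
    Integrable (fun x : ℝ => ((((Real.cosh (k * x)) ^ 2)⁻¹ : ℝ)) ^ 2) := by
  have hint := (integrable_exp_neg_mul_abs' (b := 4 * k) (by positivity)).const_mul 16
  refine hint.mono' ?_ ?_
  · have hcont : Continuous fun x : ℝ => (((Real.cosh (k * x)) ^ 2)⁻¹) ^ 2 := by
      refine ((Continuous.inv₀ ?_ (fun x => pow_ne_zero 2 (Real.cosh_pos (k * x)).ne')).pow 2)
      exact (Real.continuous_cosh.comp (continuous_const.mul continuous_id)).pow 2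
    exact hcont.aestronglyMeasurable
  · filter_upwards with x
    have hcp : (0:ℝ) < Real.cosh (k * x) := Real.cosh_pos _
    have hc : Real.exp |k * x| ≤ 2 * Real.cosh (k * x) := by
      rcases abs_cases (k * x) with ⟨h, _⟩ | ⟨h, _⟩ <;> rw [h, Real.cosh_eq] <;>
        nlinarith [Real.exp_pos (k * x), Real.exp_pos (-(k * x))]
    have habs : |k * x| = k * |x| := by rw [abs_mul, abs_of_pos hk]
    have h4 : Real.exp (4 * (k * |x|)) ≤ 16 * (Real.cosh (k * x)) ^ 4 := by
      have h := pow_le_pow_left₀ (Real.exp_pos _).le hc 4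
      rw [← Real.exp_nat_mul] at h
      push_cast at h
      rw [habs] at h
      nlinarith [h]
    have hE : (0:ℝ) < Real.exp (4 * (k * |x|)) := Real.exp_pos _
    rw [Real.norm_eq_abs, abs_of_nonneg (by positivity)]
    rw [show (((Real.cosh (k * x)) ^ 2)⁻¹) ^ 2 = ((Real.cosh (k * x)) ^ 4)⁻¹ by
      rw [inv_pow, ← pow_mul]]
    rw [Real.exp_neg, show (4 * k * |x|) = 4 * (k * |x|) by ring]
    calc ((Real.cosh (k * x)) ^ 4)⁻¹ = 16 * (1 / (16 * (Real.cosh (k * x)) ^ 4)) := by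
          field_simp
      _ ≤ 16 * (1 / Real.exp (4 * (k * |x|))) := by
          have := one_div_le_one_div_of_le hE h4
          linarith
      _ = 16 * (Real.exp (4 * (k * |x|)))⁻¹ := by rw [one_div]

theorem stmt9 (α β ω c : ℝ) (hβ : β ≠ 0) (hc : |c| < 1)
    (hC1 : 1 - c^2 - ω^2 > 0) (hC2 : α - β * (1 - c^2) > 0) :
    ∃ lam : ℝ, 0 < lam ∧ ∃ Ψ : ℝ → ℝ,
      ContDiff ℝ (⊤ : ℕ∞) Ψ ∧ Ψ ≠ 0 ∧
      Integrable (fun x : ℝ => (Ψ x)^2) ∧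
      ∀ x : ℝ,
        -(1 - c^2) * deriv (deriv Ψ) x + ((1 - c^2 - ω^2) / (1 - c^2)) * Ψ x
          - (3 * (α - β * (1 - c^2)) / (1 - c^2)) * (solitonProfile α β ω c x)^2 * Ψ x
        = -(lam^2) * Ψ x := by
  have ha : (0:ℝ) < 1 - c^2 := by
    have h := abs_lt.mp hc
    nlinarith [h.1, h.2]
  set a : ℝ := 1 - c^2 with ha_def
  set m : ℝ := 1 - c^2 - ω^2 with hm_def
  set k : ℝ := Real.sqrt m / a with hk_def
  have hk2 : k ^ 2 = m / a ^ 2 := by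
    rw [hk_def, div_pow, Real.sq_sqrt hC1.le]
  have hkpos : 0 < k := div_pos (Real.sqrt_pos.mpr hC1) ha
  set Ψ : ℝ → ℝ := fun x => ((Real.cosh (k * x)) ^ 2)⁻¹ with hΨ_def
  have hcoshne : ∀ x : ℝ, Real.cosh (k * x) ≠ 0 := fun x => (Real.cosh_pos (k * x)).ne'
  have hinner : ∀ x : ℝ, HasDerivAt (fun y : ℝ => k * y) k x := fun x => by
    simpa using (hasDerivAt_id x).const_mul k
  set Ψ1 : ℝ → ℝ := fun x => -(2 * k * Real.sinh (k * x)) / (Real.cosh (k * x)) ^ 3 with hΨ1_def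
  have hd1 : ∀ x : ℝ, HasDerivAt Ψ (Ψ1 x) x := by
    intro x
    have h := (((hinner x).cosh).pow 2).inv (pow_ne_zero 2 (hcoshne x))
    refine h.congr_deriv ?_
    symm
    have hC := hcoshne x
    simp only [hΨ1_def]
    push_cast
    simp only [Pi.pow_apply]
    rw [div_eq_div_iff (pow_ne_zero 3 hC) (pow_ne_zero 2 (pow_ne_zero 2 hC))]
    ring
  have hderiv1 : deriv Ψ = Ψ1 := funext fun x => (hd1 x).deriv
  have hd2 : ∀ x : ℝ, HasDerivAt Ψ1
      ((4 * k ^ 2 * (Real.cosh (k * x)) ^ 2 - 6 * k ^ 2) / (Real.cosh (k * x)) ^ 4) x := by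
    intro x
    have hN : HasDerivAt (fun y : ℝ => -(2 * k * Real.sinh (k * y)))
        (-(2 * k * (Real.cosh (k * x) * k))) x := (((hinner x).sinh).const_mul (2 * k)).neg
    have hD : HasDerivAt (fun y : ℝ => (Real.cosh (k * y)) ^ 3)
        ((3 : ℕ) * (Real.cosh (k * x)) ^ 2 * (Real.sinh (k * x) * k)) x := ((hinner x).cosh).pow 3
    have h := hN.div hD (pow_ne_zero 3 (hcoshne x))
    refine h.congr_deriv ?_
    symm
    have hs : (Real.sinh (k * x)) ^ 2 = (Real.cosh (k * x)) ^ 2 - 1 := by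
      have h2 := Real.cosh_sq_sub_sinh_sq (k * x)
      linarith
    have hC := hcoshne x
    push_cast
    rw [div_eq_div_iff (pow_ne_zero 4 hC) (pow_ne_zero 2 (pow_ne_zero 3 hC))]
    linear_combination (-(6 * k ^ 2 * (Real.cosh (k * x)) ^ 6)) * hs
  have hderiv2 : ∀ x : ℝ, deriv (deriv Ψ) x
      = (4 * k ^ 2 * (Real.cosh (k * x)) ^ 2 - 6 * k ^ 2) / (Real.cosh (k * x)) ^ 4 := by
    intro x
    rw [hderiv1]
    exact (hd2 x).deriv
  refine ⟨Real.sqrt (3 * m / a), Real.sqrt_pos.mpr (by positivity), Ψ, ?_, ?_, ?_, ?_⟩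
  · refine ContDiff.inv ?_ (fun x => pow_ne_zero 2 (hcoshne x))
    exact (Real.contDiff_cosh.comp ((contDiff_const).mul contDiff_id)).pow 2
  · intro h
    have h0 := congrFun h 0
    simp [hΨ_def, Real.cosh_zero] at h0
  · exact sq_inv_cosh_integrable hkpos
  · intro x
    have hCpos : (0:ℝ) < Real.cosh (k * x) := Real.cosh_pos (k * x)
    have hlam : (Real.sqrt (3 * m / a)) ^ 2 = 3 * m / a := Real.sq_sqrt (by positivity)
    have hφ : (solitonProfile α β ω c x) ^ 2
        = (2 * m / (α - β * a)) * ((Real.cosh (k * x)) ^ 2)⁻¹ := by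
      rw [solitonProfile, ← ha_def, ← hm_def]
      have harg : Real.sqrt m * x / a = k * x := by rw [hk_def]; ring
      rw [harg, mul_pow, Real.sq_sqrt (by positivity), div_pow, one_pow]
      ring
    rw [hderiv2, hlam, hφ]
    simp only [hΨ_def]
    rw [hk2]
    have hαβ : α - β * a ≠ 0 := ne_of_gt (by rw [ha_def]; exact hC2)
    have hCne := hcoshne x
    have hane : a ≠ 0 := ne_of_gt ha
    field_simp
    have hαβ2 : α - a * β ≠ 0 := by rwa [mul_comm a β]
    field_simp
    ring
end

section
/- Assume condition (C) and α > 0, and let λ > 0 and Ψ : ℝ → ℝ be smooth, square-integrable, not identically zero, with L¹Ψ = −λ²Ψ pointwise; write φ = φ_{ω,c} and κ = α − β(1−c²). Choose y₁ = Ψ, y₂ = 0, z₁ = y₁ + i·y₂ = Ψ, z₂ = (iω/(1−c²))·Ψ + c·Ψ', η₃ = −(2/(1−c²))·φ·Ψ, η₄ = −c·η₃. Then the quantity Q := 2∫[ (1−c²)(y₁')² + ((1−c²−ω²)/(1−c²))y₁² − (3κ/(1−c²))φ²y₁² ] + 2∫[ (1−c²)(y₂')² + ((1−c²−ω²)/(1−c²))y₂²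 − (κ/(1−c²))φ²y₂² ] + 2∫ |z₂ − (iω/(1−c²))z₁ − c·z₁'|² + α∫[ (c·η₃ + η₄)² + ((2/√(1−c²))·φ·y₁ + √(1−c²)·η₃)² ] equals −2λ²·∫_ℝ Ψ² dx, which is strictly negative. -/
open MeasureTheory Filter

open Set Topology

private lemma notIntegrable_of_ge (h : ℝ → ℝ) (c R : ℝ) (hc : 0 < c)
    (hb : ∀ x, R ≤ x → c ≤ h x) (hint : Integrable h) : False := by
  have h1 : IntegrableOn h (Ici R) := hint.integrableOn
  have h2 : IntegrableOn (fun _ : ℝ => c) (Ici R) := by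
    apply Integrable.mono h1 aestronglyMeasurable_const
    refine (ae_restrict_iff' measurableSet_Ici).2 (ae_of_all _ fun x hx => ?_)
    have := hb x hx
    rw [Real.norm_eq_abs, Real.norm_eq_abs, abs_of_pos hc, abs_of_nonneg (hc.le.trans this)]
    exact this
  rw [integrableOn_const_iff] at h2
  rcases h2 with h2 | h2
  · exact hc.ne' (enorm_eq_zero.mp h2)
  · simp [Real.volume_Ici] at h2

private lemma tendstoAux (Ψ q : ℝ → ℝ) (hΨ : ContDiff ℝ (⊤ : ℕ∞) Ψ)
    (hL2 : Integrable (fun x => (Ψ x)^2))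
    (heq : ∀ x, deriv (deriv Ψ) x = q x * Ψ x)
    (hq0 : ∀ᶠ x in atTop, 0 ≤ q x) :
    Tendsto (fun x => Ψ x * deriv Ψ x) atTop (𝓝 0) := by
  obtain ⟨R, hR⟩ := eventually_atTop.1 hq0
  have hd1 : Differentiable ℝ Ψ := hΨ.differentiable (by simp)
  have hΨ' : ContDiff ℝ (⊤ : ℕ∞) (deriv Ψ) := (contDiff_infty_iff_deriv.mp hΨ).2
  have hd2 : Differentiable ℝ (deriv Ψ) := hΨ'.differentiable (by simp)
  set g := fun x => Ψ x * deriv Ψ x with hgdef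
  have hgd : ∀ x, HasDerivAt g ((deriv Ψ x)^2 + q x * (Ψ x)^2) x := by
    intro x
    have h1 := ((hd1 x).hasDerivAt.mul (hd2 x).hasDerivAt)
    exact h1.congr_deriv (by rw [heq x]; ring)
  have hgdiff : Differentiable ℝ g := fun x => ((hd1 x).mul (hd2 x))
  have hmono : MonotoneOn g (Ici R) := by
    apply monotoneOn_of_deriv_nonneg (convex_Ici R) hgdiff.continuous.continuousOn
      hgdiff.differentiableOn
    intro x hx
    rw [interior_Ici] at hx
    rw [(hgd x).deriv]
    have : 0 ≤ q x := hR x hx.le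
    positivity
  have hsq : ∀ x : ℝ, HasDerivAt (fun y => (Ψ y)^2) (2 * g x) x := by
    intro x
    have := (hd1 x).hasDerivAt.pow 2
    refine this.congr_deriv ?_
    simp [hgdef]; ring
  -- linear comparison: if g is bounded below by b on [x,∞) then Ψ y ^2 ≥ Ψ x ^2 + 2 b (y - x)
  have hlin : ∀ b x y : ℝ, R ≤ x → x ≤ y → (∀ z, x ≤ z → b ≤ g z) →
      (Ψ x)^2 + 2 * b * (y - x) ≤ (Ψ y)^2 := by
    intro b x y hx hxy hb
    have hk : MonotoneOn (fun y => (Ψ y)^2 - 2 * b * y) (Ici x) := by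
      have hdiff : Differentiable ℝ (fun y => (Ψ y)^2 - 2 * b * y) := by fun_prop
      apply monotoneOn_of_deriv_nonneg (convex_Ici x) hdiff.continuous.continuousOn
        hdiff.differentiableOn
      intro z hz
      rw [interior_Ici] at hz
      have hdz : HasDerivAt (fun y => (Ψ y)^2 - 2 * b * y) (2 * g z - 2 * b * 1) z :=
        (hsq z).sub ((hasDerivAt_id z).const_mul (2 * b))
      rw [hdz.deriv]
      have := hb z hz.le
      nlinarith
    have := hk (self_mem_Ici) (by exact hxy : y ∈ Ici x) hxy
    simp only at this
    nlinarith
  have hg0 : ∀ x, R ≤ x → g x ≤ 0 := by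
    intro x hx
    by_contra hpos
    push_neg at hpos
    refine notIntegrable_of_ge (fun y => (Ψ y)^2) (2 * g x) (x + 1) (by positivity) ?_ hL2
    intro y hy
    show 2 * g x ≤ Ψ y ^ 2
    have h2 := hlin (g x) x y hx (by linarith) (fun z hz => hmono hx (hx.trans hz) hz)
    nlinarith [sq_nonneg (Ψ x), mul_le_mul_of_nonneg_left (show (1:ℝ) ≤ y - x by linarith)
      (show (0:ℝ) ≤ 2 * g x by positivity)]
  -- g tends to a limit L = sup
  set G := fun x => g (max x R) with hGdef
  have hGmono : Monotone G := fun a b hab =>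
    hmono (le_max_right a R) (le_max_right b R) (max_le_max hab le_rfl)
  have hGbd : BddAbove (range G) := ⟨0, by rintro _ ⟨x, rfl⟩; exact hg0 _ (le_max_right x R)⟩
  have hGt : Tendsto G atTop (𝓝 (⨆ x, G x)) := tendsto_atTop_ciSup hGmono hGbd
  set L := ⨆ x, G x with hLdef
  have hgt : Tendsto g atTop (𝓝 L) := by
    apply hGt.congr'
    filter_upwards [eventually_ge_atTop R] with x hx
    simp [hGdef, max_eq_left hx]
  have hL0 : L ≤ 0 := ciSup_le fun x => hg0 _ (le_max_right x R)
  have hLz : L = 0 := by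
    rcases eq_or_lt_of_le hL0 with h | h
    · exact h
    · exfalso
      have hgle : ∀ x, R ≤ x → g x ≤ L := by
        intro x hx
        have := hGmono.ge_of_tendsto hGt x
        rw [hGdef] at this
        simpa [sup_eq_left.mpr hx] using this
      -- then Ψ y ^2 ≤ Ψ R ^2 + 2 L (y - R) which goes to -∞
      have hanti : AntitoneOn (fun y => (Ψ y)^2 - 2 * L * y) (Ici R) := by
        have hdiff : Differentiable ℝ (fun y => (Ψ y)^2 - 2 * L * y) := by fun_prop
        apply antitoneOn_of_deriv_nonpos (convex_Ici R) hdiff.continuous.continuousOn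
          hdiff.differentiableOn
        intro z hz
        rw [interior_Ici] at hz
        have hdz : HasDerivAt (fun y => (Ψ y)^2 - 2 * L * y) (2 * g z - 2 * L * 1) z :=
          (hsq z).sub ((hasDerivAt_id z).const_mul (2 * L))
        rw [hdz.deriv]
        have := hgle z hz.le
        nlinarith
      have h2L : -(2 * L) ≠ 0 := by linarith
      have hd0 : 0 < ((Ψ R)^2 + 1) / (-(2 * L)) := div_pos (by positivity) (by linarith)
      have hprod : 2 * L * (((Ψ R)^2 + 1) / (-(2 * L))) = -((Ψ R)^2 + 1) := by
        field_simp
        rw [div_self h.ne]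
      have hyR : R ≤ R + ((Ψ R)^2 + 1) / (-(2 * L)) := by linarith
      have h3 := hanti self_mem_Ici (show R + ((Ψ R)^2 + 1) / (-(2 * L)) ∈ Ici R from hyR) hyR
      simp only at h3
      nlinarith [sq_nonneg (Ψ (R + ((Ψ R)^2 + 1) / (-(2 * L))))]
  rwa [hLz] at hgt

private lemma integrableAux (Ψ q : ℝ → ℝ) (hΨ : ContDiff ℝ (⊤ : ℕ∞) Ψ)
    (hL2 : Integrable (fun x => (Ψ x)^2))
    (heq : ∀ x, deriv (deriv Ψ) x = q x * Ψ x)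
    (C : ℝ) (hqb : ∀ x, |q x| ≤ C)
    (hq0 : ∀ᶠ x in atTop, 0 ≤ q x) :
    IntegrableOn (fun x => (deriv Ψ x)^2) (Ioi 0) := by
  have hgt := tendstoAux Ψ q hΨ hL2 heq hq0
  have hd1 : Differentiable ℝ Ψ := hΨ.differentiable (by simp)
  have hΨ' : ContDiff ℝ (⊤:ℕ∞) (deriv Ψ) := (contDiff_infty_iff_deriv.mp hΨ).2
  have hd2 : Differentiable ℝ (deriv Ψ) := hΨ'.differentiable (by simp)
  have hc2 : Continuous (deriv (deriv Ψ)) := ((contDiff_infty_iff_deriv.mp hΨ').2).continuous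
  have hC : 0 ≤ C := (abs_nonneg _).trans (hqb 0)
  have hqint : Integrable (fun x => deriv (deriv Ψ) x * Ψ x) := by
    apply Integrable.mono (hL2.const_mul C) (hc2.mul hd1.continuous).aestronglyMeasurable
    apply ae_of_all
    intro x
    rw [Real.norm_eq_abs, Real.norm_eq_abs, Pi.mul_apply, heq x]
    have h1 : |q x * Ψ x * Ψ x| = |q x| * (Ψ x)^2 := by
      rw [abs_mul, abs_mul, mul_assoc, abs_mul_abs_self, sq]
    rw [h1, abs_of_nonneg (mul_nonneg hC (sq_nonneg _))]
    exact mul_le_mul_of_nonneg_right (hqb x) (sq_nonneg _)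
  have hFcont : Continuous (fun x => (deriv Ψ x)^2 + deriv (deriv Ψ) x * Ψ x) :=
    (hd2.continuous.pow 2).add (hc2.mul hd1.continuous)
  have hFd : ∀ x, HasDerivAt (fun x => Ψ x * deriv Ψ x)
      ((deriv Ψ x)^2 + deriv (deriv Ψ) x * Ψ x) x := by
    intro x
    have h1 := (hd1 x).hasDerivAt.mul (hd2 x).hasDerivAt
    exact h1.congr_deriv (by ring)
  have hFTC : ∀ T : ℝ, ∫ x in (0:ℝ)..T, ((deriv Ψ x)^2 + deriv (deriv Ψ) x * Ψ x)
      = Ψ T * deriv Ψ T - Ψ 0 * deriv Ψ 0 := fun T =>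
    intervalIntegral.integral_eq_sub_of_hasDerivAt (fun x _ => hFd x)
      (hFcont.intervalIntegrable 0 T)
  have hsplit : ∀ T : ℝ, ∫ x in (0:ℝ)..T, (deriv Ψ x)^2
      = (Ψ T * deriv Ψ T - Ψ 0 * deriv Ψ 0) - ∫ x in (0:ℝ)..T, deriv (deriv Ψ) x * Ψ x := by
    intro T
    rw [← hFTC T, ← intervalIntegral.integral_sub (g := fun x => deriv (deriv Ψ) x * Ψ x) (hFcont.intervalIntegrable 0 T)
      (((hc2.mul hd1.continuous : Continuous fun x => deriv (deriv Ψ) x * Ψ x)).intervalIntegrable 0 T)]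
    congr 1
    funext x
    ring
  have hlim : Tendsto (fun T => ∫ x in (0:ℝ)..T, (deriv Ψ x)^2) atTop
      (𝓝 ((0 - Ψ 0 * deriv Ψ 0) - ∫ x in Ioi (0:ℝ), deriv (deriv Ψ) x * Ψ x)) := by
    simp only [hsplit]
    exact ((hgt.sub_const _).sub
      (intervalIntegral_tendsto_integral_Ioi 0 hqint.integrableOn tendsto_id))
  refine integrableOn_Ioi_of_intervalIntegral_norm_tendsto
    ((0 - Ψ 0 * deriv Ψ 0) - ∫ x in Ioi (0:ℝ), deriv (deriv Ψ) x * Ψ x) 0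
    (fun T : ℝ => (hd2.continuous.pow 2).integrableOn_Ioc)
    tendsto_id ?_
  have hnn : (fun T : ℝ => ∫ x in (0:ℝ)..T, ‖(deriv Ψ x)^2‖)
      = fun T : ℝ => ∫ x in (0:ℝ)..T, (deriv Ψ x)^2 := by
    funext T
    apply intervalIntegral.integral_congr
    intro x _
    exact Real.norm_of_nonneg (sq_nonneg _)
  simp only [id_eq]
  rw [hnn]
  exact hlim

private lemma keyIntegral (Ψ q : ℝ → ℝ) (hΨ : ContDiff ℝ (⊤ : ℕ∞) Ψ)
    (hL2 : Integrable (fun x => (Ψ x)^2))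
    (heq : ∀ x, deriv (deriv Ψ) x = q x * Ψ x)
    (C : ℝ) (hqb : ∀ x, |q x| ≤ C)
    (hq0 : ∀ᶠ x in atTop, 0 ≤ q x) (hq0' : ∀ᶠ x in atBot, 0 ≤ q x) :
    Integrable (fun x => (deriv Ψ x)^2 + deriv (deriv Ψ) x * Ψ x)
      ∧ ∫ x : ℝ, ((deriv Ψ x)^2 + deriv (deriv Ψ) x * Ψ x) = 0 := by
  have hd1 : Differentiable ℝ Ψ := hΨ.differentiable (by simp)
  have hΨ' : ContDiff ℝ (⊤:ℕ∞) (deriv Ψ) := (contDiff_infty_iff_deriv.mp hΨ).2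
  have hd2 : Differentiable ℝ (deriv Ψ) := hΨ'.differentiable (by simp)
  have hc2 : Continuous (deriv (deriv Ψ)) := ((contDiff_infty_iff_deriv.mp hΨ').2).continuous
  have hC : 0 ≤ C := (abs_nonneg _).trans (hqb 0)
  have hqint : Integrable (fun x => deriv (deriv Ψ) x * Ψ x) := by
    apply Integrable.mono (hL2.const_mul C) (hc2.mul hd1.continuous).aestronglyMeasurable
    apply ae_of_all
    intro x
    rw [Real.norm_eq_abs, Real.norm_eq_abs, Pi.mul_apply, heq x]
    have h1 : |q x * Ψ x * Ψ x| = |q x| * (Ψ x)^2 := by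
      rw [abs_mul, abs_mul, mul_assoc, abs_mul_abs_self, sq]
    rw [h1, abs_of_nonneg (mul_nonneg hC (sq_nonneg _))]
    exact mul_le_mul_of_nonneg_right (hqb x) (sq_nonneg _)
  have hgt : Tendsto (fun x => Ψ x * deriv Ψ x) atTop (𝓝 0) := tendstoAux Ψ q hΨ hL2 heq hq0
  -- reflection
  set Ψn : ℝ → ℝ := fun x => Ψ (-x) with hΨndef
  have hΨn : ContDiff ℝ (⊤:ℕ∞) Ψn := hΨ.comp (contDiff_id.neg)
  have hdn : ∀ x : ℝ, HasDerivAt Ψn (-(deriv Ψ (-x))) x := by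
    intro x
    have := HasDerivAt.scomp (𝕜 := ℝ) x (hd1 (-x)).hasDerivAt (hasDerivAt_neg x)
    simpa [Function.comp_def] using this
  have hderivn : deriv Ψn = fun x => -(deriv Ψ (-x)) := funext fun x => (hdn x).deriv
  have hdn2 : ∀ x : ℝ, HasDerivAt (deriv Ψn) (deriv (deriv Ψ) (-x)) x := by
    intro x
    rw [hderivn]
    have := (HasDerivAt.scomp (𝕜 := ℝ) x (hd2 (-x)).hasDerivAt (hasDerivAt_neg x)).neg
    simpa [Function.comp_def, Pi.neg_def] using this
  have heqn : ∀ x : ℝ, deriv (deriv Ψn) x = q (-x) * Ψn x := by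
    intro x
    rw [(hdn2 x).deriv, heq]
  have hL2n : Integrable (fun x => (Ψn x)^2) :=
    (MeasurePreserving.integrable_comp_emb (Measure.measurePreserving_neg _)
      (Homeomorph.neg ℝ).measurableEmbedding).2 hL2
  have hq0n : ∀ᶠ x in atTop, 0 ≤ q (-x) := tendsto_neg_atTop_atBot.eventually hq0'
  have hgbot : Tendsto (fun x => Ψ x * deriv Ψ x) atBot (𝓝 0) := by
    have h1 := tendstoAux Ψn (fun x => q (-x)) hΨn hL2n heqn hq0n
    have h2 : Tendsto (fun x : ℝ => Ψ (-x) * deriv Ψ (-x)) atTop (𝓝 0) := by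
      have := h1.neg
      simp only [hderivn] at this
      simp only [hΨndef, mul_neg, neg_neg, neg_zero] at this
      exact this
    have h3 := h2.comp tendsto_neg_atBot_atTop
    exact h3.congr fun x => by simp [Function.comp]
  -- integrability of (deriv Ψ)^2
  have hIoi : IntegrableOn (fun x => (deriv Ψ x)^2) (Ioi 0) :=
    integrableAux Ψ q hΨ hL2 heq C hqb hq0
  have hIion : IntegrableOn (fun x => (deriv Ψn x)^2) (Ioi 0) :=
    integrableAux Ψn (fun x => q (-x)) hΨn hL2n heqn C (fun x => hqb (-x)) hq0n
  have hIio : IntegrableOn (fun x => (deriv Ψ x)^2) (Iio 0) := by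
    have h3 : IntegrableOn (fun x : ℝ => (deriv Ψ (-x))^2) (Ioi 0) := by
      have := hIion
      simp only [hderivn, neg_sq] at this
      exact this
    have h4 := (MeasurePreserving.integrableOn_comp_preimage
      (Measure.measurePreserving_neg (volume : Measure ℝ))
      (Homeomorph.neg ℝ).measurableEmbedding (s := Iio (0:ℝ))
      (f := fun x : ℝ => (deriv Ψ x)^2)).1
    apply h4
    have hpre : (Neg.neg ⁻¹' (Iio (0:ℝ)) : Set ℝ) = Ioi 0 := by
      ext x; simp
    rw [hpre]
    exact h3
  have hIic : IntegrableOn (fun x => (deriv Ψ x)^2) (Iic 0) := by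
    rw [integrableOn_Iic_iff_integrableOn_Iio]
    exact hIio
  have hd2sq : Integrable (fun x => (deriv Ψ x)^2) := by
    rw [← integrableOn_univ, ← Set.Iic_union_Ioi (a := (0:ℝ))]
    exact hIic.union hIoi
  have hF : Integrable (fun x => (deriv Ψ x)^2 + deriv (deriv Ψ) x * Ψ x) := hd2sq.add hqint
  have hFd : ∀ x, HasDerivAt (fun x => Ψ x * deriv Ψ x)
      ((deriv Ψ x)^2 + deriv (deriv Ψ) x * Ψ x) x := by
    intro x
    have h1 := (hd1 x).hasDerivAt.mul (hd2 x).hasDerivAt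
    exact h1.congr_deriv (by ring)
  refine ⟨hF, ?_⟩
  have hIoiInt : ∫ x in Ioi (0:ℝ), ((deriv Ψ x)^2 + deriv (deriv Ψ) x * Ψ x)
      = 0 - Ψ 0 * deriv Ψ 0 :=
    integral_Ioi_of_hasDerivAt_of_tendsto' (fun x _ => hFd x) hF.integrableOn hgt
  have hIicInt : ∫ x in Iic (0:ℝ), ((deriv Ψ x)^2 + deriv (deriv Ψ) x * Ψ x)
      = Ψ 0 * deriv Ψ 0 - 0 :=
    integral_Iic_of_hasDerivAt_of_tendsto' (fun x _ => hFd x) hF.integrableOn hgbot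
  have hsum := intervalIntegral.integral_Iic_add_Ioi (b := (0:ℝ)) hF.integrableOn hF.integrableOn
  rw [hIoiInt, hIicInt] at hsum
  linarith [hsum]

set_option maxHeartbeats 1000000 in
theorem stmt13 (α β ω c : ℝ) (hβ : β ≠ 0) (hα : 0 < α) (hc : |c| < 1)
    (hC1 : 1 - c^2 - ω^2 > 0) (hC2 : α - β * (1 - c^2) > 0)
    (lam : ℝ) (hlam : 0 < lam) (Ψ : ℝ → ℝ)
    (hΨsmooth : ContDiff ℝ (⊤ : ℕ∞) Ψ) (hΨne : Ψ ≠ 0)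
    (hΨL2 : Integrable (fun x : ℝ => (Ψ x)^2))
    (heig : ∀ x : ℝ,
      -(1 - c^2) * deriv (deriv Ψ) x + ((1 - c^2 - ω^2) / (1 - c^2)) * Ψ x
        - (3 * (α - β * (1 - c^2)) / (1 - c^2)) * (solitonProfile α β ω c x)^2 * Ψ x
      = -(lam^2) * Ψ x)
    (φ : ℝ → ℝ) (hφ : φ = solitonProfile α β ω c)
    (κ : ℝ) (hκ : κ = α - β * (1 - c^2))
    (y₁ y₂ : ℝ → ℝ) (z₁ z₂ : ℝ → ℂ) (η₃ η₄ : ℝ → ℝ)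
    (hy₁ : y₁ = Ψ) (hy₂ : y₂ = fun _ => 0)
    (hz₁ : z₁ = fun x : ℝ => ((y₁ x : ℝ) : ℂ) + Complex.I * ((y₂ x : ℝ) : ℂ))
    (hz₂ : z₂ = fun x : ℝ => (Complex.I * (ω : ℂ) / ((1 : ℂ) - (c : ℂ)^2)) * ((Ψ x : ℝ) : ℂ)
      + (c : ℂ) * ((deriv Ψ x : ℝ) : ℂ))
    (hη₃ : η₃ = fun x : ℝ => -(2 / (1 - c^2)) * φ x * Ψ x)
    (hη₄ : η₄ = fun x : ℝ => -c * η₃ x)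
    (Q : ℝ)
    (hQ : Q = 2 * (∫ x : ℝ, ((1 - c^2) * (deriv y₁ x)^2
              + ((1 - c^2 - ω^2) / (1 - c^2)) * (y₁ x)^2
              - (3 * κ / (1 - c^2)) * (φ x)^2 * (y₁ x)^2))
          + 2 * (∫ x : ℝ, ((1 - c^2) * (deriv y₂ x)^2
              + ((1 - c^2 - ω^2) / (1 - c^2)) * (y₂ x)^2
              - (κ / (1 - c^2)) * (φ x)^2 * (y₂ x)^2))
          + 2 * (∫ x : ℝ, ‖z₂ x - (Complex.I * (ω : ℂ) / ((1 : ℂ) - (c : ℂ)^2)) * z₁ x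
              - (c : ℂ) * deriv z₁ x‖^2)
          + α * (∫ x : ℝ, ((c * η₃ x + η₄ x)^2
              + ((2 / Real.sqrt (1 - c^2)) * φ x * y₁ x + Real.sqrt (1 - c^2) * η₃ x)^2))) :
    Q = -2 * lam^2 * (∫ x : ℝ, (Ψ x)^2) ∧ Q < 0 := by
  subst hκ hφ hη₃ hη₄
  rw [hy₁, hy₂] at hz₁
  rw [hy₁, hy₂] at hQ
  subst hz₁ hz₂
  have ha : 0 < 1 - c^2 := by
    rcases abs_lt.mp hc with ⟨h1, h2⟩
    nlinarith
  have hane : (1 - c^2) ≠ 0 := ne_of_gt ha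
  have hd1 : Differentiable ℝ Ψ := hΨsmooth.differentiable (by simp)
  -- the potential
  set q : ℝ → ℝ := fun x => ((1 - c^2 - ω^2)/(1 - c^2) + lam^2)/(1 - c^2)
      - 3*(α - β*(1 - c^2))/(1 - c^2)^2 * (solitonProfile α β ω c x)^2 with hqdef
  have heq' : ∀ x, deriv (deriv Ψ) x = q x * Ψ x := by
    intro x
    have h := heig x
    rw [hqdef]
    field_simp at h ⊢
    linear_combination (-1) * h
  -- bounds on the profile
  have hprof_sq : ∀ x, (solitonProfile α β ω c x)^2 ≤ 2*(1 - c^2 - ω^2)/(α - β*(1 - c^2)) := by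
    intro x
    unfold solitonProfile
    have hch := Real.one_le_cosh (Real.sqrt (1 - c^2 - ω^2) * x / (1 - c^2))
    have hb : (1 / Real.cosh (Real.sqrt (1 - c^2 - ω^2) * x / (1 - c^2)))^2 ≤ 1 := by
      rw [div_pow, one_pow]
      apply div_le_one_of_le₀ <;> nlinarith
    have hsq := Real.sq_sqrt (show 0 ≤ 2*(1 - c^2 - ω^2)/(α - β*(1 - c^2)) by positivity)
    calc (Real.sqrt (2 * (1 - c^2 - ω^2) / (α - β * (1 - c^2))) * _)^2
        = (2*(1 - c^2 - ω^2)/(α - β*(1 - c^2))) * (1 / Real.cosh (Real.sqrt (1 - c^2 - ω^2) * x / (1 - c^2)))^2 := by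
          rw [mul_pow, hsq]
      _ ≤ 2*(1 - c^2 - ω^2)/(α - β*(1 - c^2)) * 1 := by
          apply mul_le_mul_of_nonneg_left hb (by positivity)
      _ = _ := mul_one _
  have hqb : ∀ x, |q x| ≤ |((1 - c^2 - ω^2)/(1 - c^2) + lam^2)/(1 - c^2)|
      + 3*(α - β*(1 - c^2))/(1 - c^2)^2 * (2*(1 - c^2 - ω^2)/(α - β*(1 - c^2))) := by
    intro x
    rw [hqdef, abs_le]
    have h1 := hprof_sq x
    have h2 : (0:ℝ) ≤ (solitonProfile α β ω c x)^2 := sq_nonneg _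
    have h3 : (0:ℝ) < 3*(α - β*(1 - c^2))/(1 - c^2)^2 := by positivity
    constructor
    · nlinarith [le_abs_self (((1 - c^2 - ω^2)/(1 - c^2) + lam^2)/(1 - c^2)),
        neg_abs_le (((1 - c^2 - ω^2)/(1 - c^2) + lam^2)/(1 - c^2)),
        mul_le_mul_of_nonneg_left h1 h3.le]
    · nlinarith [le_abs_self (((1 - c^2 - ω^2)/(1 - c^2) + lam^2)/(1 - c^2)),
        mul_nonneg h3.le h2]
  -- decay of the profile
  have hcosh_top : Tendsto Real.cosh atTop atTop := by
    apply tendsto_atTop_mono (fun x => ?_) (Real.tendsto_exp_atTop.atTop_div_const two_pos)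
    rw [Real.cosh_eq]
    have := Real.exp_pos (-x)
    linarith
  have hcosh_bot : Tendsto Real.cosh atBot atTop := by
    have := hcosh_top.comp tendsto_neg_atBot_atTop
    apply this.congr
    intro x
    simp [Function.comp, Real.cosh_neg]
  have hlin_top : Tendsto (fun x : ℝ => Real.sqrt (1 - c^2 - ω^2) * x / (1 - c^2)) atTop atTop := by
    have hk : 0 < Real.sqrt (1 - c^2 - ω^2) / (1 - c^2) := by positivity
    have := (tendsto_id (α := ℝ)).const_mul_atTop hk
    apply this.congr
    intro x
    field_simp
    rfl
  have hlin_bot : Tendsto (fun x : ℝ => Real.sqrt (1 - c^2 - ω^2) * x / (1 - c^2)) atBot atBot := by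
    have hk : 0 < Real.sqrt (1 - c^2 - ω^2) / (1 - c^2) := by positivity
    have := (tendsto_id (α := ℝ)).const_mul_atBot hk
    apply this.congr
    intro x
    field_simp
    rfl
  have hprof_top : Tendsto (fun x => (solitonProfile α β ω c x)^2) atTop (𝓝 0) := by
    have h1 : Tendsto (fun x : ℝ => 1 / Real.cosh (Real.sqrt (1 - c^2 - ω^2) * x / (1 - c^2)))
        atTop (𝓝 0) := by
      simp only [one_div]
      exact (hcosh_top.comp hlin_top).inv_tendsto_atTop
    have h2 : Tendsto (fun x => solitonProfile α β ω c x) atTop (𝓝 0) := by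
      unfold solitonProfile
      have := h1.const_mul (Real.sqrt (2 * (1 - c^2 - ω^2) / (α - β * (1 - c^2))))
      simpa using this
    have := h2.mul h2
    simpa [sq] using this
  have hprof_bot : Tendsto (fun x => (solitonProfile α β ω c x)^2) atBot (𝓝 0) := by
    have h1 : Tendsto (fun x : ℝ => 1 / Real.cosh (Real.sqrt (1 - c^2 - ω^2) * x / (1 - c^2)))
        atBot (𝓝 0) := by
      simp only [one_div]
      exact (hcosh_bot.comp hlin_bot).inv_tendsto_atTop
    have h2 : Tendsto (fun x => solitonProfile α β ω c x) atBot (𝓝 0) := by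
      unfold solitonProfile
      have := h1.const_mul (Real.sqrt (2 * (1 - c^2 - ω^2) / (α - β * (1 - c^2))))
      simpa using this
    have := h2.mul h2
    simpa [sq] using this
  have hc₁ : 0 < ((1 - c^2 - ω^2)/(1 - c^2) + lam^2)/(1 - c^2) := by positivity
  have hq_top : ∀ᶠ x in atTop, 0 ≤ q x := by
    have hqt : Tendsto q atTop (𝓝 (((1 - c^2 - ω^2)/(1 - c^2) + lam^2)/(1 - c^2)
        - 3*(α - β*(1 - c^2))/(1 - c^2)^2 * 0)) := by
      rw [hqdef]
      exact tendsto_const_nhds.sub (hprof_top.const_mul _)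
    rw [mul_zero, sub_zero] at hqt
    exact (hqt.eventually (eventually_gt_nhds hc₁)).mono fun x h => h.le
  have hq_bot : ∀ᶠ x in atBot, 0 ≤ q x := by
    have hqt : Tendsto q atBot (𝓝 (((1 - c^2 - ω^2)/(1 - c^2) + lam^2)/(1 - c^2)
        - 3*(α - β*(1 - c^2))/(1 - c^2)^2 * 0)) := by
      rw [hqdef]
      exact tendsto_const_nhds.sub (hprof_bot.const_mul _)
    rw [mul_zero, sub_zero] at hqt
    exact (hqt.eventually (eventually_gt_nhds hc₁)).mono fun x h => h.le
  obtain ⟨hFint, hFzero⟩ := keyIntegral Ψ q hΨsmooth hΨL2 heq' _ hqb hq_top hq_bot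
  -- value of the first integral
  have e1 : (∫ x : ℝ, ((1 - c^2) * (deriv Ψ x)^2
      + ((1 - c^2 - ω^2) / (1 - c^2)) * (Ψ x)^2
      - (3 * (α - β * (1 - c^2)) / (1 - c^2)) * (solitonProfile α β ω c x)^2 * (Ψ x)^2))
      = -(lam^2) * ∫ x : ℝ, (Ψ x)^2 := by
    have hptw : ∀ x : ℝ, (1 - c^2) * (deriv Ψ x)^2
        + ((1 - c^2 - ω^2) / (1 - c^2)) * (Ψ x)^2
        - (3 * (α - β * (1 - c^2)) / (1 - c^2)) * (solitonProfile α β ω c x)^2 * (Ψ x)^2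
        = (1 - c^2) * ((deriv Ψ x)^2 + deriv (deriv Ψ) x * Ψ x) - lam^2 * (Ψ x)^2 := by
      intro x
      have h := heig x
      linear_combination Ψ x * h
    rw [show (fun x : ℝ => (1 - c^2) * (deriv Ψ x)^2
        + ((1 - c^2 - ω^2) / (1 - c^2)) * (Ψ x)^2
        - (3 * (α - β * (1 - c^2)) / (1 - c^2)) * (solitonProfile α β ω c x)^2 * (Ψ x)^2)
        = (fun x : ℝ => (1 - c^2) * ((deriv Ψ x)^2 + deriv (deriv Ψ) x * Ψ x)
          - lam^2 * (Ψ x)^2) from funext hptw]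
    rw [integral_sub (hFint.const_mul _) (hΨL2.const_mul _), integral_const_mul,
      integral_const_mul, hFzero]
    ring
  simp only [deriv_const', Complex.ofReal_zero, mul_zero, add_zero, ne_eq,
    OfNat.ofNat_ne_zero, not_false_eq_true, zero_pow, zero_mul, sub_zero,
    integral_zero] at hQ
  have hderivz : ∀ x : ℝ, deriv (fun x : ℝ => ((Ψ x : ℝ) : ℂ)) x = ((deriv Ψ x : ℝ) : ℂ) :=
    fun x => ((hd1 x).hasDerivAt.ofReal_comp).deriv
  rw [show deriv (fun x : ℝ => ((Ψ x : ℝ) : ℂ)) = fun x => ((deriv Ψ x : ℝ) : ℂ) from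
    funext hderivz] at hQ
  have h0 : ∀ x : ℝ, Complex.I * (ω : ℂ) / (1 - (c:ℂ)^2) * ((Ψ x : ℝ) : ℂ)
      + (c:ℂ) * ((deriv Ψ x : ℝ) : ℂ)
      - Complex.I * (ω : ℂ) / (1 - (c:ℂ)^2) * ((Ψ x : ℝ) : ℂ)
      - (c:ℂ) * ((deriv Ψ x : ℝ) : ℂ) = 0 := fun x => by ring
  have hsa : Real.sqrt (1 - c^2) ≠ 0 := by positivity
  have hss : Real.sqrt (1 - c^2) * Real.sqrt (1 - c^2) = 1 - c^2 := Real.mul_self_sqrt ha.le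
  have h4 : ∀ x : ℝ, (c * (-(2 / (1 - c^2)) * solitonProfile α β ω c x * Ψ x)
      + -c * (-(2 / (1 - c^2)) * solitonProfile α β ω c x * Ψ x))^2
      + (2 / Real.sqrt (1 - c^2) * solitonProfile α β ω c x * Ψ x
        + Real.sqrt (1 - c^2) * (-(2 / (1 - c^2)) * solitonProfile α β ω c x * Ψ x))^2 = 0 := by
    intro x
    have h1 : c * (-(2 / (1 - c^2)) * solitonProfile α β ω c x * Ψ x)
        + -c * (-(2 / (1 - c^2)) * solitonProfile α β ω c x * Ψ x) = 0 := by ring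
    have h2 : 2 / Real.sqrt (1 - c^2) * solitonProfile α β ω c x * Ψ x
        + Real.sqrt (1 - c^2) * (-(2 / (1 - c^2)) * solitonProfile α β ω c x * Ψ x) = 0 := by
      field_simp
      linear_combination (2 * solitonProfile α β ω c x * Ψ x) * hss.symm
    rw [h1, h2]
    simp
  simp only [h0, h4, norm_zero, ne_eq, OfNat.ofNat_ne_zero, not_false_eq_true, zero_pow,
    integral_zero, mul_zero, add_zero] at hQ
  rw [e1] at hQ
  have hJpos : 0 < ∫ x : ℝ, (Ψ x)^2 := by
    rw [integral_pos_iff_support_of_nonneg (fun x => sq_nonneg _) hΨL2]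
    have hopen : IsOpen (Function.support fun x => (Ψ x)^2) := by
      have hset : (Function.support fun x => (Ψ x)^2) = (fun x => (Ψ x)^2) ⁻¹' {0}ᶜ := by
        ext x
        simp [Function.mem_support]
      rw [hset]
      exact (isOpen_compl_singleton).preimage (hd1.continuous.pow 2)
    obtain ⟨x₀, hx₀⟩ : ∃ x, Ψ x ≠ 0 := by
      by_contra hcon
      push_neg at hcon
      exact hΨne (funext hcon)
    exact hopen.measure_pos volume ⟨x₀, by simp [Function.mem_support, hx₀]⟩
  constructor
  · rw [hQ]
    ring
  · rw [hQ]
    nlinarith [pow_pos hlam 2, hJpos]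
end

section
/- Let N ≥ 2 and for j = 1,…,N let real parameters (ω_j, c_j) satisfy |c_j| < 1, 1 − c_j² − ω_j² > 0 and α − β(1−c_j²) > 0, with the speeds c_j pairwise distinct, and fix shifts x_j ∈ ℝ. Set ω⋆ = (1/256)·min_j (1−c_j²−ω_j²)/(1−c_j²)² and c⋆ = min_{j≠k} |c_j − c_k|. Then there exist C > 0 and T > 0 such that for all t ≥ T, all j ≠ k in {1,…,N}, and all m, n ∈ {1,2,3,4}: ∫_ℝ ( |Φ_j^{(m)}(x − c_j t − x_j)| + |(Φ_j^{(m)})'(x − c_j t − x_j)| )·( |Φ_k^{(n)}(x − c_k t − x_k)| + |(Φ_k^{(n)})'(x − c_k t − x_k)| ) dx ≤ C·e^{−4·√(ω⋆)·c⋆·t}. -/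
open MeasureTheory Filter
open Real Set

lemma my_integrable_exp_neg_abs : Integrable (fun x : ℝ => Real.exp (-|x|)) := by
  have h1 : IntegrableOn (fun x : ℝ => Real.exp (-|x|)) (Set.Iic 0) := by
    refine (integrableOn_exp_Iic 0).congr_fun (fun x hx => ?_) measurableSet_Iic
    rw [abs_of_nonpos hx, neg_neg]
  have h2 : IntegrableOn (fun x : ℝ => Real.exp (-|x|)) (Set.Ioi 0) := by
    refine (exp_neg_integrableOn_Ioi 0 one_pos).congr_fun (fun x hx => ?_) measurableSet_Ioi
    rw [abs_of_pos hx]; simp only [neg_mul, one_mul]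
  have := h1.union h2
  rwa [Set.Iic_union_Ioi, integrableOn_univ] at this

lemma my_integral_exp_neg_abs : (∫ x : ℝ, Real.exp (-|x|)) = 2 := by
  have h1 : IntegrableOn (fun x : ℝ => Real.exp (-|x|)) (Set.Iic 0) :=
    my_integrable_exp_neg_abs.integrableOn
  have h2 : IntegrableOn (fun x : ℝ => Real.exp (-|x|)) (Set.Ioi 0) :=
    my_integrable_exp_neg_abs.integrableOn
  rw [← intervalIntegral.integral_Iic_add_Ioi h1 h2,
    setIntegral_congr_fun measurableSet_Iic
      (fun x hx => by simp only []; rw [abs_of_nonpos hx, neg_neg] : Set.EqOn (fun x : ℝ => Real.exp (-|x|)) Real.exp (Set.Iic 0)),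
    setIntegral_congr_fun measurableSet_Ioi
      (fun x hx => by simp only []; rw [abs_of_pos hx] : Set.EqOn (fun x : ℝ => Real.exp (-|x|)) (fun x => Real.exp (-x)) (Set.Ioi 0)),
    integral_exp_Iic_zero, integral_exp_neg_Ioi_zero]
  norm_num

lemma my_integrable_scaled (a u : ℝ) (ha : 0 < a) :
    Integrable (fun x : ℝ => Real.exp (-(a * |x - u|))) := by
  have h : Integrable (fun x : ℝ => Real.exp (-|a * x|)) :=
    my_integrable_exp_neg_abs.comp_mul_left' (ne_of_gt ha)
  have h2 : Integrable (fun x : ℝ => Real.exp (-(a * |x|))) := by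
    refine h.congr (Filter.Eventually.of_forall fun x => ?_)
    simp only []; rw [abs_mul, abs_of_pos ha]
  exact h2.comp_sub_right u

lemma my_integral_scaled (a u : ℝ) (ha : 0 < a) :
    (∫ x : ℝ, Real.exp (-(a * |x - u|))) = 2 / a := by
  rw [integral_sub_right_eq_self (fun x : ℝ => Real.exp (-(a * |x|))) u]
  have h : (fun x : ℝ => Real.exp (-(a * |x|))) = fun x : ℝ => Real.exp (-|a * x|) := by
    funext x; rw [abs_mul, abs_of_pos ha]
  rw [h, MeasureTheory.Measure.integral_comp_mul_left (fun y : ℝ => Real.exp (-|y|)) a, my_integral_exp_neg_abs,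
    smul_eq_mul, abs_of_pos (inv_pos.2 ha)]
  field_simp

lemma my_conv_bound (a u v : ℝ) (ha : 0 < a) :
    (∫ x : ℝ, Real.exp (-(a * |x - u|)) * Real.exp (-(a * |x - v|)))
      ≤ (4 / a) * Real.exp (-(a / 2 * |u - v|)) := by
  have hle : ∀ x : ℝ, Real.exp (-(a * |x - u|)) * Real.exp (-(a * |x - v|))
      ≤ Real.exp (-(a / 2 * |u - v|)) * Real.exp (-(a / 2 * |x - u|)) := by
    intro x
    rw [← Real.exp_add, ← Real.exp_add]
    apply Real.exp_le_exp.2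
    have h1 : |u - v| ≤ |x - u| + |x - v| := by
      have := abs_sub_le u x v
      rwa [abs_sub_comm u x] at this
    nlinarith [abs_nonneg (x - v), abs_nonneg (x - u)]
  have hg : Integrable (fun x : ℝ =>
      Real.exp (-(a / 2 * |u - v|)) * Real.exp (-(a / 2 * |x - u|))) :=
    (my_integrable_scaled (a / 2) u (half_pos ha)).const_mul _
  calc (∫ x : ℝ, Real.exp (-(a * |x - u|)) * Real.exp (-(a * |x - v|)))
      ≤ ∫ x : ℝ, Real.exp (-(a / 2 * |u - v|)) * Real.exp (-(a / 2 * |x - u|)) :=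
        integral_mono_of_nonneg (Filter.Eventually.of_forall fun x => by positivity) hg
          (Filter.Eventually.of_forall hle)
    _ = Real.exp (-(a / 2 * |u - v|)) * (2 / (a / 2)) := by
        rw [integral_const_mul, my_integral_scaled (a / 2) u (half_pos ha)]
    _ = (4 / a) * Real.exp (-(a / 2 * |u - v|)) := by
        rw [mul_comm]; congr 1; field_simp; ring

lemma my_pair_bound (F G : ℝ → ℝ) (A B a u v : ℝ) (ha : 0 < a)
    (hF : ∀ x, 0 ≤ F x) (hG : ∀ x, 0 ≤ G x) (hA : 0 ≤ A) (hB : 0 ≤ B)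
    (hFb : ∀ x, F x ≤ A * Real.exp (-(a * |x|)))
    (hGb : ∀ x, G x ≤ B * Real.exp (-(a * |x|))) :
    (∫ x : ℝ, F (x - u) * G (x - v))
      ≤ A * B * ((4 / a) * Real.exp (-(a / 2 * |u - v|))) := by
  have hprod : Integrable (fun x : ℝ =>
      Real.exp (-(a * |x - u|)) * Real.exp (-(a * |x - v|))) := by
    refine (my_integrable_scaled a u ha).mono' ?_ (Filter.Eventually.of_forall fun x => ?_)
    · exact (Continuous.aestronglyMeasurable (by fun_prop))
    · rw [Real.norm_eq_abs, abs_of_pos (by positivity)]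
      nth_rewrite 2 [show Real.exp (-(a * |x - u|)) =
        Real.exp (-(a * |x - u|)) * 1 from (mul_one _).symm]
      gcongr
      exact Real.exp_le_one_iff.2 (neg_nonpos.2 (by positivity))
  calc (∫ x : ℝ, F (x - u) * G (x - v))
      ≤ ∫ x : ℝ, A * B * (Real.exp (-(a * |x - u|)) * Real.exp (-(a * |x - v|))) := by
        refine integral_mono_of_nonneg (Filter.Eventually.of_forall fun x => ?_)
          (hprod.const_mul _) (Filter.Eventually.of_forall fun x => ?_)
        · exact mul_nonneg (hF _) (hG _)
        · have h1 := hFb (x - u)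
          have h2 := hGb (x - v)
          calc F (x - u) * G (x - v)
              ≤ (A * Real.exp (-(a * |x - u|))) * (B * Real.exp (-(a * |x - v|))) :=
                mul_le_mul h1 h2 (hG _) (by positivity)
            _ = A * B * (Real.exp (-(a * |x - u|)) * Real.exp (-(a * |x - v|))) := by ring
    _ = A * B * ∫ x : ℝ, Real.exp (-(a * |x - u|)) * Real.exp (-(a * |x - v|)) :=
        integral_const_mul _ _
    _ ≤ A * B * ((4 / a) * Real.exp (-(a / 2 * |u - v|))) := by
        have := my_conv_bound a u v ha
        exact mul_le_mul_of_nonneg_left this (by positivity)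


/-- First component `Φ⁽¹⁾(x) = e^{iθx} φ_{ω,c}(x)` of the soliton profile quadruple. -/
noncomputable def prof1 (α β ω c : ℝ) (x : ℝ) : ℂ :=
  Complex.exp (Complex.I * (((ω * c / (1 - c^2)) * x : ℝ) : ℂ)) *
    ((solitonProfile α β ω c x : ℝ) : ℂ)

/-- The soliton profile quadruple `Φ⁽¹⁾, Φ⁽²⁾, Φ⁽³⁾, Φ⁽⁴⁾` (all viewed as ℂ-valued). -/
noncomputable def solProfile (α β ω c : ℝ) (m : Fin 4) (x : ℝ) : ℂ :=
  if m = 0 then prof1 α β ω c x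
  else if m = 1 then
    Complex.I * (ω : ℂ) * prof1 α β ω c x + (c : ℂ) * deriv (prof1 α β ω c) x
  else if m = 2 then ((-(solitonProfile α β ω c x)^2 / (1 - c^2) : ℝ) : ℂ)
  else ((c * (solitonProfile α β ω c x)^2 / (1 - c^2) : ℝ) : ℂ)

set_option maxHeartbeats 1000000 in
lemma solProfile_decay (α β ω c : ℝ) (hc : |c| < 1) (h1 : 0 < 1 - c^2 - ω^2)
    (h2 : 0 < α - β * (1 - c^2)) :
    ∃ A : ℝ, 0 < A ∧ ∀ (m : Fin 4) (x : ℝ),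
      ‖solProfile α β ω c m x‖ + ‖deriv (solProfile α β ω c m) x‖
        ≤ A * Real.exp (-(Real.sqrt (1 - c^2 - ω^2) / (1 - c^2) * |x|)) := by
  have hd : 0 < 1 - c^2 := by nlinarith [sq_abs c, abs_nonneg c]
  set b : ℝ := Real.sqrt (1 - c^2 - ω^2) / (1 - c^2) with hbdef
  have hb : 0 < b := div_pos (Real.sqrt_pos.2 h1) hd
  set K : ℝ := Real.sqrt (2 * (1 - c^2 - ω^2) / (α - β * (1 - c^2))) with hKdef
  have hK : 0 ≤ K := Real.sqrt_nonneg _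
  set θ : ℝ := ω * c / (1 - c^2) with hθdef
  set S : ℝ → ℝ := fun x => (Real.cosh (b * x))⁻¹ with hSdef
  set E : ℝ → ℂ := fun x => Complex.exp (Complex.I * ((θ * x : ℝ) : ℂ)) with hEdef
  set ψ : ℝ → ℝ := fun x => -(K * b) * (Real.sinh (b * x) * S x ^ 2) with hψdef
  -- basic facts about S
  have hcoshpos : ∀ y : ℝ, 0 < Real.cosh y := Real.cosh_pos
  have hSpos : ∀ x, 0 < S x := fun x => inv_pos.2 (hcoshpos _)
  have hS1 : ∀ x, S x ≤ 1 := by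
    intro x
    rw [hSdef]
    exact inv_le_one_of_one_le₀ (Real.one_le_cosh _)
  have htanh : ∀ x, |Real.sinh (b * x)| * S x ≤ 1 := by
    intro x
    have h : |Real.sinh (b * x)| ≤ Real.cosh (b * x) := by
      rw [Real.abs_sinh, ← Real.cosh_abs (b * x)]
      exact (Real.sinh_lt_cosh _).le
    calc |Real.sinh (b * x)| * S x ≤ Real.cosh (b * x) * S x :=
          mul_le_mul_of_nonneg_right h (hSpos x).le
      _ = 1 := mul_inv_cancel₀ (hcoshpos _).ne'
  have hSexp : ∀ x, S x ≤ 2 * Real.exp (-(b * |x|)) := by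
    intro x
    have hch : Real.exp (b * |x|) / 2 ≤ Real.cosh (b * x) := by
      rw [Real.cosh_eq]
      rcases abs_cases x with ⟨h, _⟩ | ⟨h, _⟩
      · rw [h] at *
        nlinarith [Real.exp_pos (-(b * x)), le_refl (Real.exp (b*x))]
      · have : b * |x| = -(b * x) := by rw [h]; ring
        rw [this]
        nlinarith [Real.exp_pos (b * x)]
    have := inv_anti₀ (by positivity : (0:ℝ) < Real.exp (b * |x|) / 2) hch
    calc S x ≤ (Real.exp (b * |x|) / 2)⁻¹ := this
      _ = 2 * Real.exp (-(b * |x|)) := by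
          rw [Real.exp_neg]; field_simp
  -- derivative computations
  have hSd : ∀ x, HasDerivAt S (-b * Real.sinh (b * x) * S x ^ 2) x := by
    intro x
    have hcosh : HasDerivAt (fun x : ℝ => Real.cosh (b * x)) (Real.sinh (b * x) * b) x :=
      (Real.hasDerivAt_cosh (b * x)).comp x (by simpa using (hasDerivAt_id x).const_mul b)
    have := hcosh.inv (hcoshpos (b * x)).ne'
    refine this.congr_deriv (Eq.symm ?_)
    rw [hSdef]
    field_simp
  have hφ : ∀ x, HasDerivAt (fun x => K * S x) (ψ x) x := by
    intro x
    have := (hSd x).const_mul K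
    refine this.congr_deriv (Eq.symm ?_)
    rw [hψdef]; ring
  have hE' : ∀ x, HasDerivAt E (Complex.I * (θ : ℂ) * E x) x := by
    intro x
    have h0 : HasDerivAt (fun x : ℝ => ((θ * x : ℝ) : ℂ)) (θ : ℂ) x := by
      simpa using ((hasDerivAt_id x).const_mul θ).ofReal_comp
    have h1 := (h0.const_mul Complex.I).cexp
    rw [hEdef]
    convert h1 using 1
    ring
  set D : ℝ → ℂ := fun x => Complex.I * (θ : ℂ) * (E x * ((K * S x : ℝ) : ℂ))
      + E x * ((ψ x : ℝ) : ℂ) with hDdef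
  have hP : ∀ x, HasDerivAt (fun x => E x * ((K * S x : ℝ) : ℂ)) (D x) x := by
    intro x
    have := (hE' x).mul ((hφ x).ofReal_comp)
    refine this.congr_deriv (Eq.symm ?_)
    rw [hDdef]
    push_cast
    ring
  have hsol : ∀ x, solitonProfile α β ω c x = K * S x := by
    intro x
    have harg : Real.sqrt (1 - c^2 - ω^2) * x / (1 - c^2) = b * x := by
      rw [hbdef]; ring
    rw [solitonProfile, harg, one_div, ← hKdef]
  have hprof : prof1 α β ω c = fun x => E x * ((K * S x : ℝ) : ℂ) := by
    funext x
    rw [prof1, hsol x]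
  have hderiv1 : deriv (prof1 α β ω c) = D := by
    rw [hprof]; funext x; exact (hP x).deriv
  set ψ' : ℝ → ℝ := fun x => K * b^2 * ((2 * (Real.sinh (b * x) * S x)^2 - 1) * S x)
    with hψ'def
  have hψd : ∀ x, HasDerivAt ψ (ψ' x) x := by
    intro x
    have hsinh : HasDerivAt (fun x : ℝ => Real.sinh (b * x)) (Real.cosh (b * x) * b) x :=
      (Real.hasDerivAt_sinh (b * x)).comp x (by simpa using (hasDerivAt_id x).const_mul b)
    have hpow : HasDerivAt (fun x => S x ^ 2) (2 * S x ^ 1 * (-b * Real.sinh (b * x) * S x ^ 2)) x :=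
      (hSd x).pow 2
    have := (hsinh.mul hpow).const_mul (-(K * b))
    rw [hψdef]
    refine this.congr_deriv (Eq.symm ?_)
    rw [hψ'def]
    have hcS : Real.cosh (b * x) * S x = 1 := mul_inv_cancel₀ (hcoshpos _).ne'
    have h2 : Real.cosh (b * x) * S x ^ 2 = S x := by
      rw [pow_two, ← mul_assoc, hcS, one_mul]
    linear_combination (K * b^2) * h2
  set D' : ℝ → ℂ := fun x => Complex.I * (θ : ℂ) * D x
      + (Complex.I * (θ : ℂ) * E x * ((ψ x : ℝ) : ℂ) + E x * ((ψ' x : ℝ) : ℂ)) with hD'def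
  have hDd : ∀ x, HasDerivAt D (D' x) x := by
    intro x
    have t1 := (hP x).const_mul (Complex.I * (θ : ℂ))
    have t2 := (hE' x).mul ((hψd x).ofReal_comp)
    exact t1.add t2
  -- norm facts
  have hEnorm : ∀ x, ‖E x‖ = 1 := by
    intro x
    rw [hEdef]
    simp [Complex.norm_exp]
  have nP : ∀ x, ‖E x * ((K * S x : ℝ) : ℂ)‖ = K * S x := by
    intro x
    rw [norm_mul, hEnorm, one_mul, Complex.norm_real, Real.norm_eq_abs,
      abs_of_nonneg (mul_nonneg hK (hSpos x).le)]
  have nψ : ∀ x, |ψ x| ≤ K * b * S x := by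
    intro x
    have he : |ψ x| = K * b * (|Real.sinh (b * x)| * S x ^ 2) := by
      rw [hψdef]
      simp only []
      rw [abs_mul, abs_neg, abs_of_nonneg (mul_nonneg hK hb.le), abs_mul,
        abs_of_nonneg (pow_nonneg (hSpos x).le 2)]
    rw [he]
    calc K * b * (|Real.sinh (b * x)| * S x ^ 2)
        = K * b * ((|Real.sinh (b * x)| * S x) * S x) := by ring
      _ ≤ K * b * (1 * S x) := by
          apply mul_le_mul_of_nonneg_left _ (mul_nonneg hK hb.le)
          exact mul_le_mul_of_nonneg_right (htanh x) (hSpos x).le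
      _ = K * b * S x := by ring
  have nψ' : ∀ x, |ψ' x| ≤ K * b^2 * S x := by
    intro x
    have he : |ψ' x| = K * b^2 * (|2 * (Real.sinh (b * x) * S x)^2 - 1| * S x) := by
      rw [hψ'def]
      simp only []
      rw [abs_mul, abs_of_nonneg (mul_nonneg hK (sq_nonneg b)), abs_mul,
        abs_of_nonneg (hSpos x).le]
    rw [he]
    have h3 : |2 * (Real.sinh (b * x) * S x)^2 - 1| ≤ 1 := by
      have ht : |Real.sinh (b * x) * S x| ≤ 1 := by
        rw [abs_mul, abs_of_nonneg (hSpos x).le]; exact htanh x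
      have ht2 : (Real.sinh (b * x) * S x)^2 ≤ 1 := by
        rw [← sq_abs]
        nlinarith [abs_nonneg (Real.sinh (b * x) * S x)]
      rw [abs_le]
      constructor <;> nlinarith [sq_nonneg (Real.sinh (b * x) * S x)]
    calc K * b^2 * (|2 * (Real.sinh (b * x) * S x)^2 - 1| * S x)
        ≤ K * b^2 * (1 * S x) := by
          apply mul_le_mul_of_nonneg_left _ (mul_nonneg hK (sq_nonneg b))
          exact mul_le_mul_of_nonneg_right h3 (hSpos x).le
      _ = K * b^2 * S x := by ring
  have nD : ∀ x, ‖D x‖ ≤ |θ| * (K * S x) + K * b * S x := by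
    intro x
    rw [hDdef]
    refine (norm_add_le _ _).trans ?_
    gcongr
    · simp only [norm_mul, Complex.norm_I, one_mul, Complex.norm_real, Real.norm_eq_abs,
        nP x]
      exact le_refl _
    · simp only [norm_mul, hEnorm, one_mul, Complex.norm_real, Real.norm_eq_abs]
      exact nψ x
  have nD' : ∀ x, ‖D' x‖ ≤ |θ| * (|θ| * (K * S x) + K * b * S x)
      + (|θ| * (K * b * S x) + K * b^2 * S x) := by
    intro x
    rw [hD'def]
    refine (norm_add_le _ _).trans ?_
    gcongr
    · simp only [norm_mul, Complex.norm_I, one_mul, Complex.norm_real, Real.norm_eq_abs]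
      exact mul_le_mul_of_nonneg_left (nD x) (abs_nonneg θ)
    · refine (norm_add_le _ _).trans ?_
      gcongr
      · simp only [norm_mul, Complex.norm_I, one_mul, hEnorm, mul_one, Complex.norm_real,
          Real.norm_eq_abs]
        exact mul_le_mul_of_nonneg_left (nψ x) (abs_nonneg θ)
      · simp only [norm_mul, hEnorm, one_mul, Complex.norm_real, Real.norm_eq_abs]
        exact nψ' x
  clear_value b K θ S E ψ D ψ' D'
  -- the four constants
  have hθnn : (0:ℝ) ≤ |θ| := abs_nonneg θ
  have hωnn : (0:ℝ) ≤ |ω| := abs_nonneg ω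
  have hcnn : (0:ℝ) ≤ |c| := abs_nonneg c
  have hKb : (0:ℝ) ≤ K * b := mul_nonneg hK hb.le
  have hKθ : (0:ℝ) ≤ |θ| * K := mul_nonneg hθnn hK
  set C0 : ℝ := K + |θ| * K + K * b with hC0def
  set C1 : ℝ := |ω| * K + |c| * (|θ| * K + K * b)
      + (|ω| * (|θ| * K + K * b)
        + |c| * (|θ| * (|θ| * K + K * b) + (|θ| * (K * b) + K * b ^ 2))) with hC1def
  set C2 : ℝ := (K ^ 2 + 2 * K ^ 2 * b) / (1 - c ^ 2) with hC2def
  set C3 : ℝ := |c| * ((K ^ 2 + 2 * K ^ 2 * b) / (1 - c ^ 2)) with hC3def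
  have hN0 : 0 ≤ C0 := by
    rw [hC0def]; nlinarith
  have hN1 : 0 ≤ C1 := by
    rw [hC1def]
    have h1 : (0:ℝ) ≤ |θ| * K + K * b := by linarith
    nlinarith [mul_nonneg hωnn hK, mul_nonneg hcnn h1, mul_nonneg hωnn h1,
      mul_nonneg hθnn h1, mul_nonneg hθnn hKb, mul_nonneg hK (sq_nonneg b),
      mul_nonneg hcnn (add_nonneg (mul_nonneg hθnn h1)
        (add_nonneg (mul_nonneg hθnn hKb) (mul_nonneg hK (sq_nonneg b))))]
  have hN2 : 0 ≤ C2 := by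
    rw [hC2def]
    apply div_nonneg _ hd.le
    nlinarith [sq_nonneg K, mul_nonneg (mul_nonneg (by norm_num : (0:ℝ) ≤ 2) (sq_nonneg K)) hb.le]
  have hN3 : 0 ≤ C3 := by
    rw [hC3def]; exact mul_nonneg hcnn (by rw [← hC2def]; exact hN2)
  refine ⟨2 * (C0 + C1 + C2 + C3) + 1, by linarith, ?_⟩
  have hfin : ∀ (Cm : ℝ), 0 ≤ Cm → Cm ≤ C0 + C1 + C2 + C3 → ∀ (x : ℝ) (v : ℝ),
      v ≤ Cm * S x → v ≤ (2 * (C0 + C1 + C2 + C3) + 1) * Real.exp (-(b * |x|)) := by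
    intro Cm hCm hle x v hv
    have h1 : Cm * S x ≤ Cm * (2 * Real.exp (-(b * |x|))) :=
      mul_le_mul_of_nonneg_left (hSexp x) hCm
    have h2 : (0:ℝ) < Real.exp (-(b * |x|)) := Real.exp_pos _
    nlinarith [mul_le_mul_of_nonneg_right
      (by linarith : 2 * Cm ≤ 2 * (C0 + C1 + C2 + C3) + 1) h2.le]
  intro m x
  fin_cases m
  · -- m = 0
    have e : solProfile α β ω c 0 = fun y => E y * ((K * S y : ℝ) : ℂ) := by
      rw [← hprof]; funext y; simp [solProfile]
    have hd0 : deriv (fun y => E y * ((K * S y : ℝ) : ℂ)) = D := funext fun y => (hP y).deriv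
    rw [show (⟨0, by norm_num⟩ : Fin 4) = 0 from rfl, e, hd0]
    refine hfin C0 hN0 (by linarith) x _ ?_
    calc ‖E x * ((K * S x : ℝ) : ℂ)‖ + ‖D x‖
        ≤ K * S x + (|θ| * (K * S x) + K * b * S x) := by
          rw [nP x]; linarith [nD x]
      _ = C0 * S x := by rw [hC0def]; ring
  · -- m = 1
    have e : solProfile α β ω c 1
        = fun y => Complex.I * (ω : ℂ) * (E y * ((K * S y : ℝ) : ℂ)) + (c : ℂ) * D y := by
      funext y
      have h0 : solProfile α β ω c 1 y
          = Complex.I * (ω : ℂ) * prof1 α β ω c y + (c : ℂ) * deriv (prof1 α β ω c) y := by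
        simp [solProfile]
      rw [h0, hderiv1, hprof]
    have hd1 : deriv (fun y => Complex.I * (ω : ℂ) * (E y * ((K * S y : ℝ) : ℂ)) + (c : ℂ) * D y)
        = fun y => Complex.I * (ω : ℂ) * D y + (c : ℂ) * D' y :=
      funext fun y => (((hP y).const_mul (Complex.I * (ω : ℂ))).add ((hDd y).const_mul ((c : ℂ)))).deriv
    rw [show (⟨1, by norm_num⟩ : Fin 4) = 1 from rfl, e, hd1]
    refine hfin C1 hN1 (by linarith) x _ ?_
    have v1 : ‖Complex.I * (ω : ℂ) * (E x * ((K * S x : ℝ) : ℂ)) + (c : ℂ) * D x‖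
        ≤ |ω| * (K * S x) + |c| * (|θ| * (K * S x) + K * b * S x) := by
      refine (norm_add_le _ _).trans ?_
      gcongr
      · simp only [norm_mul, Complex.norm_I, one_mul, Complex.norm_real, Real.norm_eq_abs, nP x]
        exact le_refl _
      · simp only [norm_mul, Complex.norm_real, Real.norm_eq_abs]
        exact mul_le_mul_of_nonneg_left (nD x) hcnn
    have v2 : ‖Complex.I * (ω : ℂ) * D x + (c : ℂ) * D' x‖
        ≤ |ω| * (|θ| * (K * S x) + K * b * S x)
          + |c| * (|θ| * (|θ| * (K * S x) + K * b * S x)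
            + (|θ| * (K * b * S x) + K * b ^ 2 * S x)) := by
      refine (norm_add_le _ _).trans ?_
      gcongr
      · simp only [norm_mul, Complex.norm_I, one_mul, Complex.norm_real, Real.norm_eq_abs]
        exact mul_le_mul_of_nonneg_left (nD x) hωnn
      · simp only [norm_mul, Complex.norm_real, Real.norm_eq_abs]
        exact mul_le_mul_of_nonneg_left (nD' x) hcnn
    calc ‖Complex.I * (ω : ℂ) * (E x * ((K * S x : ℝ) : ℂ)) + (c : ℂ) * D x‖
          + ‖Complex.I * (ω : ℂ) * D x + (c : ℂ) * D' x‖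
        ≤ (|ω| * (K * S x) + |c| * (|θ| * (K * S x) + K * b * S x))
          + (|ω| * (|θ| * (K * S x) + K * b * S x)
            + |c| * (|θ| * (|θ| * (K * S x) + K * b * S x)
              + (|θ| * (K * b * S x) + K * b ^ 2 * S x))) := by linarith
      _ = C1 * S x := by rw [hC1def]; ring
  · -- m = 2
    have e : solProfile α β ω c 2 = fun y => ((-(K * S y) ^ 2 / (1 - c ^ 2) : ℝ) : ℂ) := by
      funext y
      have h0 : solProfile α β ω c 2 y
          = ((-(solitonProfile α β ω c y) ^ 2 / (1 - c ^ 2) : ℝ) : ℂ) := by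
        simp [solProfile]
      rw [h0, hsol y]
    have hr : ∀ y, HasDerivAt (fun z => -(K * S z) ^ 2 / (1 - c ^ 2))
        (-(2 * (K * S y) * ψ y) / (1 - c ^ 2)) y := by
      intro y
      have := (((hφ y).pow 2).neg).div_const (1 - c ^ 2)
      refine this.congr_deriv (Eq.symm ?_)
      ring
    have hd2 : deriv (fun y => ((-(K * S y) ^ 2 / (1 - c ^ 2) : ℝ) : ℂ))
        = fun y => ((-(2 * (K * S y) * ψ y) / (1 - c ^ 2) : ℝ) : ℂ) :=
      funext fun y => ((hr y).ofReal_comp).deriv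
    rw [show (⟨2, by norm_num⟩ : Fin 4) = 2 from rfl, e, hd2]
    refine hfin C2 hN2 (by linarith) x _ ?_
    have v1 : ‖((-(K * S x) ^ 2 / (1 - c ^ 2) : ℝ) : ℂ)‖ ≤ K ^ 2 * S x / (1 - c ^ 2) := by
      rw [Complex.norm_real, Real.norm_eq_abs, abs_div, abs_neg,
        abs_of_nonneg (sq_nonneg (K * S x)), abs_of_pos hd]
      rw [div_le_div_iff_of_pos_right hd]
      nlinarith [hSpos x, hS1 x, sq_nonneg K]
    have v2 : ‖((-(2 * (K * S x) * ψ x) / (1 - c ^ 2) : ℝ) : ℂ)‖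
        ≤ 2 * K ^ 2 * b * S x / (1 - c ^ 2) := by
      rw [Complex.norm_real, Real.norm_eq_abs, abs_div, abs_of_pos hd, abs_neg,
        div_le_div_iff_of_pos_right hd]
      have h2KS : (0:ℝ) ≤ 2 * (K * S x) := by nlinarith [hSpos x]
      have hlast : 2 * (K * S x) * (K * b * S x) ≤ 2 * K ^ 2 * b * S x := by
        nlinarith [hS1 x, hSpos x, sq_nonneg K,
          mul_nonneg (mul_nonneg (sq_nonneg K) hb.le) (hSpos x).le]
      calc |2 * (K * S x) * ψ x| = 2 * (K * S x) * |ψ x| := by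
            rw [abs_mul, abs_of_nonneg h2KS]
        _ ≤ 2 * (K * S x) * (K * b * S x) := mul_le_mul_of_nonneg_left (nψ x) h2KS
        _ ≤ 2 * K ^ 2 * b * S x := hlast
    calc ‖((-(K * S x) ^ 2 / (1 - c ^ 2) : ℝ) : ℂ)‖
          + ‖((-(2 * (K * S x) * ψ x) / (1 - c ^ 2) : ℝ) : ℂ)‖
        ≤ K ^ 2 * S x / (1 - c ^ 2) + 2 * K ^ 2 * b * S x / (1 - c ^ 2) := by linarith
      _ = C2 * S x := by rw [hC2def]; ring
  · -- m = 3
    have e : solProfile α β ω c 3 = fun y => ((c * (K * S y) ^ 2 / (1 - c ^ 2) : ℝ) : ℂ) := by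
      funext y
      have h0 : solProfile α β ω c 3 y
          = ((c * (solitonProfile α β ω c y) ^ 2 / (1 - c ^ 2) : ℝ) : ℂ) := by
        simp [solProfile]
      rw [h0, hsol y]
    have hr : ∀ y, HasDerivAt (fun z => c * (K * S z) ^ 2 / (1 - c ^ 2))
        (c * (2 * (K * S y) * ψ y) / (1 - c ^ 2)) y := by
      intro y
      have := (((hφ y).pow 2).const_mul c).div_const (1 - c ^ 2)
      refine this.congr_deriv (Eq.symm ?_)
      ring
    have hd3 : deriv (fun y => ((c * (K * S y) ^ 2 / (1 - c ^ 2) : ℝ) : ℂ))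
        = fun y => ((c * (2 * (K * S y) * ψ y) / (1 - c ^ 2) : ℝ) : ℂ) :=
      funext fun y => ((hr y).ofReal_comp).deriv
    rw [show (⟨3, by norm_num⟩ : Fin 4) = 3 from rfl, e, hd3]
    refine hfin C3 hN3 (by linarith) x _ ?_
    have hnum : (K * S x) ^ 2 ≤ K ^ 2 * S x := by nlinarith [hSpos x, hS1 x, sq_nonneg K]
    have v1 : ‖((c * (K * S x) ^ 2 / (1 - c ^ 2) : ℝ) : ℂ)‖
        ≤ |c| * (K ^ 2 * S x) / (1 - c ^ 2) := by
      rw [Complex.norm_real, Real.norm_eq_abs, abs_div, abs_of_pos hd, abs_mul,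
        abs_of_nonneg (sq_nonneg (K * S x)), div_le_div_iff_of_pos_right hd]
      exact mul_le_mul_of_nonneg_left hnum hcnn
    have v2 : ‖((c * (2 * (K * S x) * ψ x) / (1 - c ^ 2) : ℝ) : ℂ)‖
        ≤ |c| * (2 * K ^ 2 * b * S x) / (1 - c ^ 2) := by
      rw [Complex.norm_real, Real.norm_eq_abs, abs_div, abs_of_pos hd, abs_mul,
        div_le_div_iff_of_pos_right hd]
      have h2KS : (0:ℝ) ≤ 2 * (K * S x) := by nlinarith [hSpos x]
      have hlast : 2 * (K * S x) * (K * b * S x) ≤ 2 * K ^ 2 * b * S x := by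
        nlinarith [hS1 x, hSpos x, sq_nonneg K,
          mul_nonneg (mul_nonneg (sq_nonneg K) hb.le) (hSpos x).le]
      have hg : |2 * (K * S x) * ψ x| ≤ 2 * K ^ 2 * b * S x := by
        calc |2 * (K * S x) * ψ x| = 2 * (K * S x) * |ψ x| := by
              rw [abs_mul, abs_of_nonneg h2KS]
          _ ≤ 2 * (K * S x) * (K * b * S x) := mul_le_mul_of_nonneg_left (nψ x) h2KS
          _ ≤ 2 * K ^ 2 * b * S x := hlast
      exact mul_le_mul_of_nonneg_left hg hcnn
    calc ‖((c * (K * S x) ^ 2 / (1 - c ^ 2) : ℝ) : ℂ)‖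
          + ‖((c * (2 * (K * S x) * ψ x) / (1 - c ^ 2) : ℝ) : ℂ)‖
        ≤ |c| * (K ^ 2 * S x) / (1 - c ^ 2) + |c| * (2 * K ^ 2 * b * S x) / (1 - c ^ 2) := by
          linarith
      _ = C3 * S x := by rw [hC3def]; ring

set_option maxHeartbeats 1000000 in
theorem stmt15 (α β : ℝ) (hβ : β ≠ 0) (N : ℕ) (hN : 2 ≤ N)
    (ωs cs xs : Fin N → ℝ)
    (hc : ∀ j, |cs j| < 1)
    (hC1 : ∀ j, 0 < 1 - (cs j)^2 - (ωs j)^2)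
    (hC2 : ∀ j, 0 < α - β * (1 - (cs j)^2))
    (hdist : ∀ j k, j ≠ k → cs j ≠ cs k)
    (ωstar cstar : ℝ)
    (hωstar : ωstar = (1 / 256) * ⨅ j : Fin N, (1 - (cs j)^2 - (ωs j)^2) / (1 - (cs j)^2)^2)
    (hcstar : cstar = ⨅ p : {p : Fin N × Fin N // p.1 ≠ p.2}, |cs p.val.1 - cs p.val.2|) :
    ∃ C T : ℝ, 0 < C ∧ 0 < T ∧
      ∀ t : ℝ, T ≤ t → ∀ j k : Fin N, j ≠ k → ∀ m n : Fin 4,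
        (∫ x : ℝ,
          (‖solProfile α β (ωs j) (cs j) m (x - cs j * t - xs j)‖
            + ‖deriv (solProfile α β (ωs j) (cs j) m) (x - cs j * t - xs j)‖)
          * (‖solProfile α β (ωs k) (cs k) n (x - cs k * t - xs k)‖
            + ‖deriv (solProfile α β (ωs k) (cs k) n) (x - cs k * t - xs k)‖))
        ≤ C * Real.exp (-4 * Real.sqrt ωstar * cstar * t) := by
  haveI hne : Nonempty (Fin N) := ⟨⟨0, by omega⟩⟩
  haveI hne2 : Nonempty {p : Fin N × Fin N // p.1 ≠ p.2} :=
    ⟨⟨(⟨0, by omega⟩, ⟨1, by omega⟩), Fin.ne_of_val_ne (by norm_num)⟩⟩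
  set b : Fin N → ℝ := fun j => Real.sqrt (1 - (cs j)^2 - (ωs j)^2) / (1 - (cs j)^2)
    with hbdef
  have hd : ∀ j, 0 < 1 - (cs j)^2 := fun j => by
    nlinarith [sq_abs (cs j), abs_nonneg (cs j), hc j]
  have hbpos : ∀ j, 0 < b j := fun j => div_pos (Real.sqrt_pos.2 (hC1 j)) (hd j)
  choose A hApos hAbound using fun j =>
    solProfile_decay α β (ωs j) (cs j) (hc j) (hC1 j) (hC2 j)
  have hAbound' : ∀ (j : Fin N) (m : Fin 4) (x : ℝ),
      ‖solProfile α β (ωs j) (cs j) m x‖ + ‖deriv (solProfile α β (ωs j) (cs j) m) x‖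
        ≤ A j * Real.exp (-(b j * |x|)) := by
    intro j m x
    simpa only [hbdef] using hAbound j m x
  obtain ⟨A0, hA0⟩ := Finite.exists_le A
  have hA0pos : 0 < A0 := lt_of_lt_of_le (hApos (Classical.arbitrary _)) (hA0 _)
  set b0 : ℝ := Finset.univ.inf' Finset.univ_nonempty b with hb0def
  have hb0pos : 0 < b0 := by
    rw [hb0def, Finset.lt_inf'_iff]
    exact fun j _ => hbpos j
  have hb0le : ∀ j, b0 ≤ b j := fun j => Finset.inf'_le _ (Finset.mem_univ j)
  obtain ⟨B0, hB0⟩ := Finite.exists_le b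
  obtain ⟨M, hM⟩ := Finite.exists_le (fun p : Fin N × Fin N => |xs p.1 - xs p.2|)
  have hM0 : 0 ≤ M := le_trans (abs_nonneg _)
    (hM (Classical.arbitrary (Fin N), Classical.arbitrary (Fin N)))
  have hcsnn : 0 ≤ cstar := by
    rw [hcstar]; exact le_ciInf fun p => abs_nonneg _
  have hcsle : ∀ j k, j ≠ k → cstar ≤ |cs j - cs k| := by
    intro j k hjk
    rw [hcstar]
    exact ciInf_le (Finite.bddBelow_range _) (⟨(j, k), hjk⟩ : {p : Fin N × Fin N // p.1 ≠ p.2})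
  have hsq : ∀ j, Real.sqrt ωstar ≤ b j / 16 := by
    intro j
    have h2 : (⨅ i : Fin N, (1 - (cs i)^2 - (ωs i)^2) / (1 - (cs i)^2)^2)
        ≤ (1 - (cs j)^2 - (ωs j)^2) / (1 - (cs j)^2)^2 :=
      ciInf_le (Finite.bddBelow_range _) j
    have h3 : (b j)^2 = (1 - (cs j)^2 - (ωs j)^2) / (1 - (cs j)^2)^2 := by
      rw [hbdef]
      simp only []
      rw [div_pow, Real.sq_sqrt (hC1 j).le]
    have h1 : ωstar ≤ (b j / 16)^2 := by
      rw [hωstar]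
      nlinarith [h2, h3]
    calc Real.sqrt ωstar ≤ Real.sqrt ((b j / 16)^2) := Real.sqrt_le_sqrt h1
      _ = b j / 16 := Real.sqrt_sq (div_nonneg (hbpos j).le (by norm_num))
  refine ⟨A0 * A0 * ((4 / b0) * Real.exp (B0 / 2 * M)), 1, ?_, one_pos, ?_⟩
  · have : 0 < 4 / b0 := by positivity
    positivity
  intro t ht j k hjk m n
  have ht0 : (0:ℝ) ≤ t := le_trans zero_le_one ht
  have hm0pos : 0 < min (b j) (b k) := lt_min (hbpos j) (hbpos k)
  have hsqm : Real.sqrt ωstar ≤ min (b j) (b k) / 16 := by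
    rcases le_total (b j) (b k) with h | h
    · rw [min_eq_left h]; exact hsq j
    · rw [min_eq_right h]; exact hsq k
  simp only [sub_sub]
  set u : ℝ := cs j * t + xs j with hu
  set v : ℝ := cs k * t + xs k with hv
  set m0 : ℝ := min (b j) (b k) with hm0
  have key := my_pair_bound
    (fun y => ‖solProfile α β (ωs j) (cs j) m y‖ + ‖deriv (solProfile α β (ωs j) (cs j) m) y‖)
    (fun y => ‖solProfile α β (ωs k) (cs k) n y‖ + ‖deriv (solProfile α β (ωs k) (cs k) n) y‖)
    (A j) (A k) m0 u v hm0pos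
    (fun x => add_nonneg (norm_nonneg _) (norm_nonneg _))
    (fun x => add_nonneg (norm_nonneg _) (norm_nonneg _))
    (hApos j).le (hApos k).le
    (fun x => (hAbound' j m x).trans (mul_le_mul_of_nonneg_left
      (Real.exp_le_exp.2 (by nlinarith [abs_nonneg x, min_le_left (b j) (b k)]))
      (hApos j).le))
    (fun x => (hAbound' k n x).trans (mul_le_mul_of_nonneg_left
      (Real.exp_le_exp.2 (by nlinarith [abs_nonneg x, min_le_right (b j) (b k)]))
      (hApos k).le))
  have hexp : Real.exp (-(m0 / 2 * |u - v|))
      ≤ Real.exp (B0 / 2 * M) * Real.exp (-4 * Real.sqrt ωstar * cstar * t) := by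
    rw [← Real.exp_add]
    apply Real.exp_le_exp.2
    have huv : u - v = (cs j - cs k) * t + (xs j - xs k) := by rw [hu, hv]; ring
    have h1 : |cs j - cs k| * t - |xs j - xs k| ≤ |u - v| := by
      rw [huv]
      have h' := abs_add_le ((cs j - cs k) * t + (xs j - xs k)) (-(xs j - xs k))
      rw [add_neg_cancel_right, abs_neg, abs_mul, abs_of_nonneg ht0] at h'
      linarith
    have h2 : cstar * t ≤ |cs j - cs k| * t :=
      mul_le_mul_of_nonneg_right (hcsle j k hjk) ht0
    have h3 : |xs j - xs k| ≤ M := hM (j, k)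
    have h4 : 4 * Real.sqrt ωstar ≤ m0 / 2 := by
      have := Real.sqrt_nonneg ωstar
      linarith
    have h6 : 0 ≤ cstar * t := mul_nonneg hcsnn ht0
    have h7 : m0 / 2 * (cstar * t - M) ≤ m0 / 2 * |u - v| :=
      mul_le_mul_of_nonneg_left (by linarith) (by linarith)
    have h8 : 4 * Real.sqrt ωstar * (cstar * t) ≤ m0 / 2 * (cstar * t) :=
      mul_le_mul_of_nonneg_right h4 h6
    have h9 : m0 / 2 * M ≤ B0 / 2 * M := by
      have : m0 ≤ B0 := le_trans (min_le_left _ _) (hB0 j)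
      apply mul_le_mul_of_nonneg_right _ hM0
      linarith
    nlinarith [h7, h8, h9]
  refine key.trans ?_
  have s1 : (4 / m0) * Real.exp (-(m0 / 2 * |u - v|))
      ≤ (4 / b0) * (Real.exp (B0 / 2 * M) * Real.exp (-4 * Real.sqrt ωstar * cstar * t)) := by
    apply mul_le_mul _ hexp (Real.exp_pos _).le
      (div_nonneg (by norm_num) hb0pos.le)
    apply div_le_div_of_nonneg_left (by norm_num) hb0pos
    exact le_min (hb0le j) (hb0le k)
  have s2 : A j * A k ≤ A0 * A0 :=
    mul_le_mul (hA0 j) (hA0 k) (hApos k).le hA0pos.le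
  calc A j * A k * ((4 / m0) * Real.exp (-(m0 / 2 * |u - v|)))
      ≤ A0 * A0 * ((4 / b0) * (Real.exp (B0 / 2 * M)
          * Real.exp (-4 * Real.sqrt ωstar * cstar * t))) := by
        apply mul_le_mul s2 s1 _ (by positivity)
        apply mul_nonneg (div_nonneg (by norm_num) hm0pos.le) (Real.exp_pos _).le
    _ = A0 * A0 * ((4 / b0) * Real.exp (B0 / 2 * M))
          * Real.exp (-4 * Real.sqrt ωstar * cstar * t) := by ring
end
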